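/- arXiv:1409.6082 — 9 statements merged into one kernel-verified Lean document; each statement's English description precedes it below -/
import Mathlib

section
/- Let a < b be real numbers, let α ∈ (0,1], and let ψ : [a,b] → ℂ be α-Hölder continuous. Then for every λ ∈ (a,b) the principal value p.v.∫_a^b ψ(t)/(t−λ) dt exists, i.e. the limit lim_{δ→0⁺} ∫_{[a,b]∖(λ−δ,λ+δ)} ψ(t)/(t−λ) dt exists in ℂ. -/
/-!
Split `ψ t / (t - λ) = (ψ t - ψ λ) / (t - λ) + ψ λ / (t - λ)`. By Hölder continuity the first
term is `O(|t - λ| ^ (α - 1))`, hence integrable on `[a, b]`, so its integral over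
`[a, b] \ (λ - δ, λ + δ)` converges as `δ → 0`. For the second term the symmetric excision makes
the logarithmic singularities cancel: once `δ ≤ min (λ - a) (b - λ)` its integral is the constant
`ψ λ * log ((b - λ) / (λ - a))`.
-/

open MeasureTheory Filter Set Topology

theorem continuousOn_of_dist_le_mul_rpow {X Y : Type*} [PseudoMetricSpace X]
    [PseudoMetricSpace Y] {f : X → Y} {s : Set X} {M α : ℝ} (hα : 0 < α)
    (hf : ∀ x ∈ s, ∀ y ∈ s, dist (f x) (f y) ≤ M * dist x y ^ α) : ContinuousOn f s := by
  intro x hx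
  rw [ContinuousWithinAt, tendsto_iff_dist_tendsto_zero]
  have hbound : Tendsto (fun y => M * dist y x ^ α) (𝓝[s] x) (𝓝 0) := by
    have hcont : Continuous fun y => M * dist y x ^ α :=
      continuous_const.mul <| (continuous_id.dist continuous_const).rpow_const fun _ => .inr hα.le
    exact (hcont.tendsto' x 0 (by simp [hα.ne'])).mono_left nhdsWithin_le_nhds
  exact squeeze_zero' (.of_forall fun _ => dist_nonneg)
    (eventually_nhdsWithin_of_forall fun y hy => hf y hy x hx) hbound

theorem intervalIntegrable_abs_rpow {r : ℝ} (hr : -1 < r) (a b : ℝ) :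
    IntervalIntegrable (fun x : ℝ => |x| ^ r) volume a b := by
  have hpos : ∀ c, 0 ≤ c → IntervalIntegrable (fun x : ℝ => |x| ^ r) volume 0 c := fun c hc =>
    (intervalIntegral.intervalIntegrable_rpow' hr).congr fun x hx => by
      rw [uIoc_of_le hc] at hx
      simp only [abs_of_pos hx.1]
  have hzero : ∀ c, IntervalIntegrable (fun x : ℝ => |x| ^ r) volume 0 c := by
    intro c
    rcases le_total 0 c with hc | hc
    · exact hpos c hc
    · refine (IntervalIntegrable.iff_comp_neg).2 ?_
      simpa only [abs_neg, neg_zero] using hpos (-c) (by linarith)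
  exact (hzero a).symm.trans (hzero b)

theorem intervalIntegrable_abs_sub_rpow {r : ℝ} (hr : -1 < r) (a b c : ℝ) :
    IntervalIntegrable (fun x : ℝ => |x - c| ^ r) volume a b := by
  simpa using (intervalIntegrable_abs_rpow hr (a - c) (b - c)).comp_sub_right c

theorem integrableOn_sub_div_sub_of_norm_sub_le {ψ : ℝ → ℂ} {a b c M α : ℝ} (hα : 0 < α)
    (hψ : ContinuousOn ψ (Icc a b)) (hbound : ∀ t ∈ Icc a b, ‖ψ t - ψ c‖ ≤ M * |t - c| ^ α) :
    IntegrableOn (fun t : ℝ => (ψ t - ψ c) / ((t : ℂ) - c)) (Icc a b) := by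
  have hdom : IntegrableOn (fun t => M * |t - c| ^ (α - 1)) (Icc a b) :=
    ((intervalIntegrable_iff').1 <|
      ((intervalIntegrable_abs_sub_rpow (by linarith) a b c).const_mul M)).mono_set Icc_subset_uIcc
  have hmeas : AEStronglyMeasurable (fun t : ℝ => (ψ t - ψ c) / ((t : ℂ) - c))
      (volume.restrict (Icc a b)) :=
    ((hψ.aestronglyMeasurable measurableSet_Icc).sub aestronglyMeasurable_const).div₀
      (Complex.continuous_ofReal.sub continuous_const).aestronglyMeasurable
  refine hdom.mono' hmeas ?_
  filter_upwards [ae_restrict_mem measurableSet_Icc,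
    ae_restrict_of_ae (compl_mem_ae_iff.2 (measure_singleton c))] with t ht htc
  have hdist : 0 < |t - c| := abs_pos.2 (sub_ne_zero.2 htc)
  calc ‖(ψ t - ψ c) / ((t : ℂ) - c)‖ = ‖ψ t - ψ c‖ / |t - c| := by
        rw [norm_div, ← Complex.ofReal_sub, Complex.norm_real, Real.norm_eq_abs]
    _ ≤ M * |t - c| ^ α / |t - c| := div_le_div_of_nonneg_right (hbound t ht) hdist.le
    _ = M * |t - c| ^ (α - 1) := by rw [Real.rpow_sub_one hdist.ne', mul_div_assoc]

theorem tendsto_setIntegral_diff_Ioo {E : Type*} [NormedAddCommGroup E] [NormedSpace ℝ E]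
    {f : ℝ → E} {s : Set ℝ} (hf : IntegrableOn f s) (c : ℝ) :
    Tendsto (fun δ => ∫ t in s \ Ioo (c - δ) (c + δ), f t) (𝓝 0) (𝓝 (∫ t in s, f t)) := by
  have hvol : Tendsto (fun δ => volume.restrict s (Ioo (c - δ) (c + δ))) (𝓝 0) (𝓝 0) := by
    have hlen : Tendsto (fun δ : ℝ => ENNReal.ofReal (2 * δ)) (𝓝 0) (𝓝 0) :=
      (ENNReal.continuous_ofReal.comp (continuous_const_mul 2)).tendsto' 0 0 (by simp)
    refine tendsto_of_tendsto_of_tendsto_of_le_of_le tendsto_const_nhds hlen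
      (fun _ => zero_le) fun δ => ?_
    calc volume.restrict s (Ioo (c - δ) (c + δ)) ≤ volume (Ioo (c - δ) (c + δ)) :=
          Measure.restrict_le_self _
      _ = ENNReal.ofReal (2 * δ) := by rw [Real.volume_Ioo]; ring_nf
  have hcore : Tendsto (fun δ => ∫ t in s ∩ Ioo (c - δ) (c + δ), f t) (𝓝 0) (𝓝 0) := by
    simpa only [Measure.restrict_restrict measurableSet_Ioo, inter_comm]
      using hf.tendsto_setIntegral_nhds_zero hvol
  simpa using (tendsto_const_nhds.sub hcore).congr fun δ =>
    (eq_sub_of_add_eq' (integral_inter_add_sdiff measurableSet_Ioo hf)).symm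

theorem Icc_diff_Ioo_eq_union {a b c δ : ℝ} (hδ : 0 ≤ δ) (ha : δ ≤ c - a) (hb : δ ≤ b - c) :
    Icc a b \ Ioo (c - δ) (c + δ) = Icc a (c - δ) ∪ Icc (c + δ) b := by
  ext t
  simp only [Set.mem_sdiff, mem_Icc, mem_Ioo, mem_union, not_and_or, not_lt]
  constructor
  · rintro ⟨⟨hat, htb⟩, htl | htr⟩
    · exact .inl ⟨hat, htl⟩
    · exact .inr ⟨htr, htb⟩
  · rintro (⟨hat, htl⟩ | ⟨htr, htb⟩)
    · exact ⟨⟨hat, by linarith⟩, .inl htl⟩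
    · exact ⟨⟨by linarith, htb⟩, .inr htr⟩

theorem setIntegral_inv_sub_Icc_diff_Ioo {a b c δ : ℝ} (hδ : 0 < δ) (ha : δ ≤ c - a)
    (hb : δ ≤ b - c) :
    ∫ t in Icc a b \ Ioo (c - δ) (c + δ), (t - c)⁻¹ = Real.log ((b - c) / (c - a)) := by
  have hcont : ContinuousOn (fun t : ℝ => (t - c)⁻¹) {c}ᶜ :=
    (continuous_sub_right c).continuousOn.inv₀ fun t ht => sub_ne_zero.2 ht
  have hleft : IntegrableOn (fun t : ℝ => (t - c)⁻¹) (Icc a (c - δ)) :=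
    (hcont.mono fun t ht (htc : t = c) => by linarith [ht.2]).integrableOn_Icc
  have hright : IntegrableOn (fun t : ℝ => (t - c)⁻¹) (Icc (c + δ) b) :=
    (hcont.mono fun t ht (htc : t = c) => by linarith [ht.1]).integrableOn_Icc
  have hdisj : Disjoint (Icc a (c - δ)) (Icc (c + δ) b) :=
    disjoint_left.2 fun t hl hr => by linarith [hl.2, hr.1]
  rw [Icc_diff_Ioo_eq_union hδ.le ha hb, setIntegral_union hdisj measurableSet_Icc hleft hright,
    integral_Icc_eq_integral_Ioc, integral_Icc_eq_integral_Ioc,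
    ← intervalIntegral.integral_of_le (by linarith),
    ← intervalIntegral.integral_of_le (by linarith),
    intervalIntegral.integral_comp_sub_right (fun x => x⁻¹),
    intervalIntegral.integral_comp_sub_right (fun x => x⁻¹),
    integral_inv_of_neg (by linarith) (by linarith),
    integral_inv_of_pos (by linarith) (by linarith),
    ← Real.log_mul (div_ne_zero (by linarith) (by linarith))
      (div_ne_zero (by linarith) (by linarith))]
  congr 1
  have hac : a - c ≠ 0 := by linarith
  have hca : c - a ≠ 0 := by linarith
  field_simp [hδ.ne']
  ring

theorem setIntegral_div_sub_Icc_diff_Ioo {ψ : ℝ → ℂ} {a b c δ : ℝ}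
    (hg : IntegrableOn (fun t : ℝ => (ψ t - ψ c) / ((t : ℂ) - c)) (Icc a b)) (hδ : 0 < δ)
    (ha : δ ≤ c - a) (hb : δ ≤ b - c) :
    ∫ t in Icc a b \ Ioo (c - δ) (c + δ), ψ t / ((t : ℂ) - c) =
      (∫ t in Icc a b \ Ioo (c - δ) (c + δ), (ψ t - ψ c) / ((t : ℂ) - c)) +
        ψ c * Real.log ((b - c) / (c - a)) := by
  set S := Icc a b \ Ioo (c - δ) (c + δ)
  have hinv : IntegrableOn (fun t : ℝ => ((t : ℂ) - c)⁻¹) S := by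
    refine ContinuousOn.integrableOn_compact (isCompact_Icc.diff isOpen_Ioo) ?_
    refine (Complex.continuous_ofReal.sub continuous_const).continuousOn.inv₀ fun t ht hzero => ?_
    have htc : t = c := by simpa [sub_eq_zero] using hzero
    exact ht.2 ⟨by linarith, by linarith⟩
  have hlog : ∫ t in S, ((t : ℂ) - c)⁻¹ = Real.log ((b - c) / (c - a)) := by
    rw [← setIntegral_inv_sub_Icc_diff_Ioo hδ ha hb]
    norm_cast
  calc ∫ t in S, ψ t / ((t : ℂ) - c)
      = ∫ t in S, ((ψ t - ψ c) / ((t : ℂ) - c) + ψ c * ((t : ℂ) - c)⁻¹) :=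
        integral_congr_ae (.of_forall fun t => by ring)
    _ = _ := by
        rw [integral_add (hg.mono_set sdiff_subset) (hinv.const_mul _), integral_const_mul, hlog]

theorem pv_exists_general (a b α : ℝ) (hα : α ∈ Set.Ioc (0:ℝ) 1)
    (ψ : ℝ → ℂ) (M : ℝ)
    (hHolder : ∀ t ∈ Set.Icc a b, ∀ t' ∈ Set.Icc a b,
      ‖ψ t - ψ t'‖ ≤ M * |t - t'| ^ α)
    (lam : ℝ) (hlam : lam ∈ Set.Ioo a b) :
    ∃ L : ℂ, Filter.Tendsto
      (fun δ : ℝ => ∫ t in Set.Icc a b \ Set.Ioo (lam - δ) (lam + δ),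
        ψ t / ((t : ℂ) - (lam : ℂ)))
      (nhdsWithin 0 (Set.Ioi 0)) (nhds L) := by
  have hψ : ContinuousOn ψ (Icc a b) :=
    continuousOn_of_dist_le_mul_rpow hα.1 <| by
      simpa only [dist_eq_norm, Real.norm_eq_abs] using hHolder
  have hg := integrableOn_sub_div_sub_of_norm_sub_le hα.1 hψ fun t ht =>
    hHolder t ht lam (Ioo_subset_Icc_self hlam)
  refine ⟨(∫ t in Icc a b, (ψ t - ψ lam) / ((t : ℂ) - lam)) +
    ψ lam * Real.log ((b - lam) / (lam - a)), ?_⟩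
  refine (((tendsto_setIntegral_diff_Ioo hg lam).mono_left nhdsWithin_le_nhds).add_const
    _).congr' ?_
  filter_upwards [Ioo_mem_nhdsGT (lt_min (sub_pos.2 hlam.1) (sub_pos.2 hlam.2))] with δ hδ
  exact (setIntegral_div_sub_Icc_diff_Ioo hg hδ.1 (hδ.2.le.trans (min_le_left _ _))
    (hδ.2.le.trans (min_le_right _ _))).symm

/-- existence of the principal value `p.v.∫_a^b ψ(t)/(t-λ) dt` for an
α-Hölder continuous function ψ on [a,b] and λ ∈ (a,b). -/
theorem pv_exists (a b α : ℝ) (hab : a < b) (hα : α ∈ Set.Ioc (0:ℝ) 1)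
    (ψ : ℝ → ℂ) (M : ℝ) (hM : 0 ≤ M)
    (hHolder : ∀ t ∈ Set.Icc a b, ∀ t' ∈ Set.Icc a b,
      ‖ψ t - ψ t'‖ ≤ M * |t - t'| ^ α)
    (lam : ℝ) (hlam : lam ∈ Set.Ioo a b) :
    ∃ L : ℂ, Filter.Tendsto
      (fun δ : ℝ => ∫ t in Set.Icc a b \ Set.Ioo (lam - δ) (lam + δ),
        ψ t / ((t : ℂ) - (lam : ℂ)))
      (nhdsWithin 0 (Set.Ioi 0)) (nhds L) :=
  pv_exists_general a b α hα ψ M hHolder lam hlam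
end

section
/- Let s > 1/2 and let α ∈ (0, min(1, s − 1/2)). Then there exists a constant C = C(s,α) > 0 such that for every measurable h : ℝ → ℂ with (1+y²)^{s/2} h ∈ L²(ℝ), the Fourier transform ĥ(k) = ∫_ℝ e^{−iky} h(y) dy satisfies |ĥ(k) − ĥ(k')| ≤ C ‖(1+y²)^{s/2} h‖_{L²(ℝ)} |k − k'|^α for all k, k' ∈ ℝ with |k − k'| ≤ 1. -/
/-!
For `α ≤ 1` the Fourier kernel satisfies
`|e^{-iky} - e^{-ik'y}| ≤ 2 min(1, |k - k'| |y|) ≤ 2 |k - k'|^α |y|^α`.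
Writing `h = w⁻¹ g` with `w y = (1 + y²)^{s/2}` and `g ∈ L²`, Cauchy–Schwarz bounds
`|ĥ(k) - ĥ(k')|` by `2 |k - k'|^α ‖|y|^α w⁻¹‖₂ ‖g‖₂`, and `|y|^α w⁻¹` is square integrable
because `2 (s - α) > 1`; with exponent `0` in place of `α` the same bound gives `h ∈ L¹`.
-/

open MeasureTheory Complex

theorem min_one_le_rpow {t α : ℝ} (ht : 0 ≤ t) (hα0 : 0 ≤ α) (hα1 : α ≤ 1) :
    min 1 t ≤ t ^ α := by
  rcases le_or_gt t 1 with ht1 | ht1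
  · calc min 1 t ≤ t := min_le_right _ _
      _ = t ^ (1 : ℝ) := (Real.rpow_one t).symm
      _ ≤ t ^ α := Real.rpow_le_rpow_of_exponent_ge' ht ht1 hα0 hα1
  · exact (min_le_left _ _).trans (Real.one_le_rpow ht1.le hα0)

theorem norm_cexp_mul_I_sub_cexp_mul_I_le {α : ℝ} (hα0 : 0 ≤ α) (hα1 : α ≤ 1)
    (a b : ℝ) :
    ‖cexp (a * I) - cexp (b * I)‖ ≤ 2 * |a - b| ^ α := by
  have hfactor : cexp (a * I) - cexp (b * I) = cexp (b * I) * (cexp (I * ↑(a - b)) - 1) := by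
    rw [mul_sub, mul_one, ← Complex.exp_add]; push_cast; ring_nf
  have hsmall : ‖cexp (I * ↑(a - b)) - 1‖ ≤ |a - b| := Real.norm_exp_I_mul_ofReal_sub_one_le
  have hlarge : ‖cexp (I * ↑(a - b)) - 1‖ ≤ 2 := by
    refine (norm_sub_le _ _).trans_eq ?_
    rw [mul_comm, norm_exp_ofReal_mul_I, norm_one]; norm_num
  rw [hfactor, norm_mul, norm_exp_ofReal_mul_I, one_mul]
  calc ‖cexp (I * ↑(a - b)) - 1‖ ≤ 2 * min 1 |a - b| := by
        rw [mul_min_of_nonneg _ _ zero_le_two, mul_one]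
        exact le_min hlarge (hsmall.trans (by linarith [abs_nonneg (a - b)]))
    _ ≤ 2 * |a - b| ^ α := by gcongr; exact min_one_le_rpow (abs_nonneg _) hα0 hα1

theorem norm_integral_le_mul_eLpNorm_two_mul_eLpNorm_two {X E G : Type*}
    [MeasurableSpace X] {μ : Measure X} [NormedAddCommGroup E] [NormedSpace ℝ E]
    [NormedAddCommGroup G] {F : X → E} {φ : X → ℝ} {g : X → G} {c : ℝ} (hc : 0 ≤ c)
    (hφ : MemLp φ 2 μ) (hg : MemLp g 2 μ) (hF : ∀ x, ‖F x‖ ≤ c * φ x * ‖g x‖) :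
    ‖∫ x, F x ∂μ‖ ≤ c * (eLpNorm φ 2 μ).toReal * (eLpNorm g 2 μ).toReal := by
  have henorm : ‖∫ x, F x ∂μ‖ₑ ≤ ‖c‖ₑ * eLpNorm φ 2 μ * eLpNorm g 2 μ :=
    calc ‖∫ x, F x ∂μ‖ₑ ≤ ∫⁻ x, ‖F x‖ₑ ∂μ := enorm_integral_le_lintegral_enorm _
      _ = eLpNorm F 1 μ := eLpNorm_one_eq_lintegral_enorm.symm
      _ ≤ eLpNorm ((c • φ) • fun x => ‖g x‖) 1 μ := eLpNorm_mono fun x =>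
          (hF x).trans (Real.le_norm_self (c * φ x * ‖g x‖))
      _ ≤ eLpNorm (c • φ) 2 μ * eLpNorm (fun x => ‖g x‖) 2 μ :=
          eLpNorm_smul_le_mul_eLpNorm hg.norm.1 (hφ.1.const_smul c)
      _ = ‖c‖ₑ * eLpNorm φ 2 μ * eLpNorm g 2 μ := by rw [eLpNorm_const_smul, eLpNorm_norm]
  rw [← Real.norm_of_nonneg hc, ← toReal_enorm c, ← ENNReal.toReal_mul,
    ← ENNReal.toReal_mul, ← toReal_enorm]
  exact ENNReal.toReal_mono (by finiteness [hφ.eLpNorm_ne_top, hg.eLpNorm_ne_top]) henorm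

theorem memLp_two_abs_rpow_mul_inv_one_add_sq_rpow {β s : ℝ} (hβ : 0 ≤ β)
    (hβs : β < s - 1 / 2) :
    MemLp (fun y : ℝ => |y| ^ β * ((1 + y ^ 2) ^ (s / 2))⁻¹) 2 volume := by
  have hmeas : Measurable fun y : ℝ => |y| ^ β * ((1 + y ^ 2) ^ (s / 2))⁻¹ := by fun_prop
  rw [memLp_two_iff_integrable_sq hmeas.aestronglyMeasurable]
  have hint : Integrable (fun y : ℝ => (1 + ‖y‖ ^ 2) ^ (-(2 * (s - β)) / 2)) volume :=
    integrable_rpow_neg_one_add_norm_sq (by simp only [Module.finrank_self, Nat.cast_one]; linarith)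
  refine hint.mono' (hmeas.pow_const 2).aestronglyMeasurable (.of_forall fun y => ?_)
  have hpos : (0 : ℝ) < 1 + y ^ 2 := by positivity
  have habs : (|y| ^ β) ^ 2 = (y ^ 2) ^ β := by
    rw [← Real.rpow_natCast, ← Real.rpow_mul (abs_nonneg _), ← sq_abs y,
      ← Real.rpow_natCast |y| 2, ← Real.rpow_mul (abs_nonneg _)]
    push_cast; ring_nf
  have hweight : ((1 + y ^ 2) ^ (s / 2))⁻¹ ^ 2 = (1 + y ^ 2) ^ (-s) := by
    rw [← Real.rpow_neg hpos.le, ← Real.rpow_natCast, ← Real.rpow_mul hpos.le]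
    push_cast; ring_nf
  rw [Real.norm_eq_abs, abs_of_nonneg (by positivity), mul_pow, habs, hweight, Real.norm_eq_abs,
    sq_abs]
  calc (y ^ 2) ^ β * (1 + y ^ 2) ^ (-s) ≤ (1 + y ^ 2) ^ β * (1 + y ^ 2) ^ (-s) := by
        gcongr; linarith
    _ = (1 + y ^ 2) ^ (-(2 * (s - β)) / 2) := by rw [← Real.rpow_add hpos]; ring_nf

theorem integrable_cexp_mul_of_memLp_two_weighted {s : ℝ} (hs : 1 / 2 < s) {h : ℝ → ℂ}
    (hg : MemLp (fun y : ℝ => ((1 + y ^ 2) ^ (s / 2) : ℝ) • h y) 2 volume) (t : ℝ) :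
    Integrable (fun y : ℝ => cexp (-I * t * y) * h y) := by
  have hw := memLp_two_abs_rpow_mul_inv_one_add_sq_rpow le_rfl (sub_pos.mpr hs)
  simp only [Real.rpow_zero, one_mul] at hw
  have hh : (fun y : ℝ => ((1 + y ^ 2) ^ (s / 2))⁻¹ • ((1 + y ^ 2) ^ (s / 2) : ℝ) • h y) = h :=
    funext fun y => by rw [smul_smul, inv_mul_cancel₀ (by positivity), one_smul]
  have hint : Integrable h := hh ▸ memLp_one_iff_integrable.mp (hg.smul hw)
  refine hint.bdd_mul (c := 1) (by fun_prop) (.of_forall fun y => ?_)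
  rw [show -I * t * y = ↑(-(t * y)) * I by push_cast; ring, norm_exp_ofReal_mul_I]

theorem norm_cexp_neg_I_mul_sub_le {α : ℝ} (hα0 : 0 ≤ α) (hα1 : α ≤ 1) (k k' y : ℝ) :
    ‖cexp (-I * k * y) - cexp (-I * k' * y)‖ ≤ 2 * |k - k'| ^ α * |y| ^ α := by
  have hreal : ∀ t : ℝ, cexp (-I * t * y) = cexp (↑(-(t * y)) * I) := fun t => by
    push_cast; ring_nf
  have hdist : |-(k * y) - -(k' * y)| = |k - k'| * |y| := by
    rw [← abs_mul, ← abs_neg]; ring_nf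
  rw [hreal, hreal, mul_assoc, ← Real.mul_rpow (abs_nonneg _) (abs_nonneg _), ← hdist]
  exact norm_cexp_mul_I_sub_cexp_mul_I_le hα0 hα1 _ _

theorem norm_cexp_neg_I_mul_sub_mul_le {α : ℝ} (hα0 : 0 ≤ α) (hα1 : α ≤ 1)
    (s k k' y : ℝ) (z : ℂ) : ‖cexp (-I * k * y) * z - cexp (-I * k' * y) * z‖ ≤
      2 * |k - k'| ^ α * (|y| ^ α * ((1 + y ^ 2) ^ (s / 2))⁻¹) *
        ‖((1 + y ^ 2) ^ (s / 2) : ℝ) • z‖ := by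
  have hw : (0 : ℝ) < (1 + y ^ 2) ^ (s / 2) := by positivity
  rw [← sub_mul, norm_mul, norm_smul, Real.norm_of_nonneg hw.le]
  calc _ ≤ 2 * |k - k'| ^ α * |y| ^ α * ‖z‖ := by
        gcongr; exact norm_cexp_neg_I_mul_sub_le hα0 hα1 k k' y
    _ = _ := by field_simp

theorem fourier_coefficient_holder_general (s α : ℝ)
    (hα : 0 < α ∧ α < min 1 (s - 1 / 2)) :
    ∃ C > 0, ∀ h : ℝ → ℂ, Measurable h →
      MeasureTheory.MemLp (fun y : ℝ => ((1 + y ^ 2) ^ (s / 2) : ℝ) • h y) 2 volume →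
      ∀ k k' : ℝ, |k - k'| ≤ 1 →
        ‖(∫ y : ℝ, Complex.exp (-Complex.I * (k : ℂ) * (y : ℂ)) * h y)
            - ∫ y : ℝ, Complex.exp (-Complex.I * (k' : ℂ) * (y : ℂ)) * h y‖ ≤
          C * (MeasureTheory.eLpNorm
            (fun y : ℝ => ((1 + y ^ 2) ^ (s / 2) : ℝ) • h y) 2 volume).toReal
            * |k - k'| ^ α := by
  obtain ⟨hα0, hαmin⟩ := hα
  have hα1 : α ≤ 1 := hαmin.le.trans (min_le_left _ _)
  have hαs : α < s - 1 / 2 := hαmin.trans_le (min_le_right _ _)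
  have hs : 1 / 2 < s := by linarith
  set ψ : ℝ → ℝ := fun y => |y| ^ α * ((1 + y ^ 2) ^ (s / 2))⁻¹
  have hψ : MemLp ψ 2 volume := memLp_two_abs_rpow_mul_inv_one_add_sq_rpow hα0.le hαs
  set K := (eLpNorm ψ 2 volume).toReal
  refine ⟨2 * K + 1, by positivity, fun h _ hg k k' _ => ?_⟩
  set N := (eLpNorm (fun y : ℝ => ((1 + y ^ 2) ^ (s / 2) : ℝ) • h y) 2 volume).toReal
  rw [← integral_sub (integrable_cexp_mul_of_memLp_two_weighted hs hg k)
    (integrable_cexp_mul_of_memLp_two_weighted hs hg k')]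
  calc _ ≤ 2 * |k - k'| ^ α * K * N :=
        norm_integral_le_mul_eLpNorm_two_mul_eLpNorm_two (by positivity) hψ hg
          fun y => norm_cexp_neg_I_mul_sub_mul_le hα0.le hα1 s k k' y (h y)
    _ ≤ (2 * K + 1) * N * |k - k'| ^ α := by
        rw [show 2 * |k - k'| ^ α * K * N = 2 * K * N * |k - k'| ^ α by ring]
        gcongr; linarith

/-- for s > 1/2 and α ∈ (0, min(1, s-1/2)), the Fourier transform of a
function in the weighted space L^{2,s}(ℝ) is locally α-Hölder continuous, with constant
proportional to the weighted L² norm. -/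
theorem fourier_coefficient_holder (s α : ℝ) (hs : 1 / 2 < s)
    (hα : 0 < α ∧ α < min 1 (s - 1 / 2)) :
    ∃ C > 0, ∀ h : ℝ → ℂ, Measurable h →
      MeasureTheory.MemLp (fun y : ℝ => ((1 + y ^ 2) ^ (s / 2) : ℝ) • h y) 2 volume →
      ∀ k k' : ℝ, |k - k'| ≤ 1 →
        ‖(∫ y : ℝ, Complex.exp (-Complex.I * (k : ℂ) * (y : ℂ)) * h y)
            - ∫ y : ℝ, Complex.exp (-Complex.I * (k' : ℂ) * (y : ℂ)) * h y‖ ≤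
          C * (MeasureTheory.eLpNorm
            (fun y : ℝ => ((1 + y ^ 2) ^ (s / 2) : ℝ) • h y) 2 volume).toReal
            * |k - k'| ^ α :=
  fourier_coefficient_holder_general s α hα
end

section
/- Let k, λ ∈ ℝ with λ ≥ 0 and let u : [0,∞) → ℝ be a C² function with u(0) = 0 satisfying −u''(x) + (x−k)² u(x) = λ u(x) for all x ≥ 0, and such that u, u', and x ↦ (x−k)u(x) all belong to L²(0,∞), with ∫₀^∞ u(x)² dx = 1. Then for every x ≥ 0 one has u(x)² ≤ 2 (∫₀^∞ u'(t)² dt)^{1/2} ≤ 2 λ^{1/2}; in particular sup_{x≥0} |u(x)| ≤ 2^{1/2} λ^{1/4}. -/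
open MeasureTheory Set

/-!
Since `u 0 = 0`, `u(x)² = ∫₀ˣ 2 u u' ≤ ε ‖u‖² + ε⁻¹ ‖u'‖²` for every `ε > 0`, and optimizing over
`ε` gives `u(x)² ≤ 2 ‖u'‖`. Multiplying the equation by `u` and integrating by parts gives
`‖u'‖² + ‖(x - k) u‖² = λ`: the boundary term `u u'` vanishes at `0` by the Dirichlet condition and
at `∞` because `u u'` and its derivative `u'² + u u''` are both integrable. Hence `‖u'‖² ≤ λ`.
-/

theorem le_two_sqrt_of_forall_le_add_div {a B : ℝ} (hB : 0 ≤ B) (h : ∀ ε > 0, a ≤ ε + B / ε) :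
    a ≤ 2 * √B := by
  rcases hB.eq_or_lt with rfl | hB
  · simpa using le_of_forall_pos_le_add fun ε hε => by simpa using h ε hε
  · have hs : 0 < √B := Real.sqrt_pos.2 hB
    calc a ≤ √B + B / √B := h _ hs
      _ = 2 * √B := by rw [Real.div_sqrt]; ring

theorem integrable_mul_of_integrable_sq {α : Type*} [MeasurableSpace α] {μ : Measure α}
    {f g : α → ℝ} (hf : AEStronglyMeasurable f μ) (hg : AEStronglyMeasurable g μ)
    (hf2 : Integrable (fun x => f x ^ 2) μ) (hg2 : Integrable (fun x => g x ^ 2) μ) :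
    Integrable (fun x => f x * g x) μ :=
  ((memLp_two_iff_integrable_sq hf).2 hf2).integrable_mul ((memLp_two_iff_integrable_sq hg).2 hg2)

theorem integral_Ioi_of_hasDerivAt_of_integrableOn {f f' : ℝ → ℝ} {a : ℝ}
    (hcont : ContinuousWithinAt f (Ici a) a) (hderiv : ∀ x ∈ Ioi a, HasDerivAt f (f' x) x)
    (f'int : IntegrableOn f' (Ioi a)) (fint : IntegrableOn f (Ioi a)) :
    ∫ x in Ioi a, f' x = -f a := by
  rw [integral_Ioi_of_hasDerivAt_of_tendsto hcont hderiv f'int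
    (tendsto_zero_of_hasDerivAt_of_integrableOn_Ioi hderiv f'int fint), zero_sub]

section HalfLine

variable {u v : ℝ → ℝ} {a : ℝ}

theorem continuousOn_of_hasDerivWithinAt_Ici
    (hu : ∀ x ∈ Ici a, HasDerivWithinAt u (v x) (Ici a) x) : ContinuousOn u (Ici a) :=
  fun x hx => (hu x hx).continuousWithinAt

theorem sq_le_mul_integral_sq_add_div (hu : ∀ x ∈ Ici a, HasDerivWithinAt u (v x) (Ici a) x)
    (hv : ContinuousOn v (Ici a)) (hua : u a = 0)
    (hu2 : IntegrableOn (fun x => u x ^ 2) (Ioi a)) (hv2 : IntegrableOn (fun x => v x ^ 2) (Ioi a))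
    {b : ℝ} (hab : a ≤ b) {ε : ℝ} (hε : 0 < ε) :
    u b ^ 2 ≤ ε * (∫ x in Ioi a, u x ^ 2) + (∫ x in Ioi a, v x ^ 2) / ε := by
  have huc := continuousOn_of_hasDerivWithinAt_Ici hu
  have hsub : Icc a b ⊆ Ici a := Icc_subset_Ici_self
  have huv : IntervalIntegrable (fun x => 2 * u x * v x) volume a b :=
    (((continuousOn_const.mul huc).mul hv).mono hsub).intervalIntegrable_of_Icc hab
  have hftc : ∫ x in a..b, 2 * u x * v x = u b ^ 2 := by
    rw [intervalIntegral.integral_eq_sub_of_hasDerivAt_of_le (f := fun x => u x ^ 2) hab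
      ((huc.pow 2).mono hsub) (fun x hx => ?_) huv, hua]
    · ring
    · simpa using ((hu x hx.1.le).hasDerivAt (Ici_mem_nhds hx.1)).fun_pow 2
  have hle_Ioi : ∀ f : ℝ → ℝ, IntegrableOn f (Ioi a) → 0 ≤ f →
      ∫ x in a..b, f x ≤ ∫ x in Ioi a, f x := fun f hf hpos => by
    rw [intervalIntegral.integral_of_le hab]
    exact setIntegral_mono_set hf (.of_forall hpos) (.of_forall Ioc_subset_Ioi_self)
  have hiu : IntervalIntegrable (fun x => u x ^ 2) volume a b :=
    ((huc.pow 2).mono hsub).intervalIntegrable_of_Icc hab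
  have hiv : IntervalIntegrable (fun x => v x ^ 2) volume a b :=
    ((hv.pow 2).mono hsub).intervalIntegrable_of_Icc hab
  calc u b ^ 2 = ∫ x in a..b, 2 * u x * v x := hftc.symm
    _ ≤ ∫ x in a..b, (ε * u x ^ 2 + v x ^ 2 / ε) := by
        refine intervalIntegral.integral_mono_on hab huv ((hiu.const_mul ε).add (hiv.div_const ε))
          fun x _ => ?_
        have hgap : ε * u x ^ 2 + v x ^ 2 / ε - 2 * u x * v x = (ε * u x - v x) ^ 2 / ε := by
          field_simp; ring
        linarith [div_nonneg (sq_nonneg (ε * u x - v x)) hε.le]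
    _ = ε * (∫ x in a..b, u x ^ 2) + (∫ x in a..b, v x ^ 2) / ε := by
        rw [intervalIntegral.integral_add (hiu.const_mul ε) (hiv.div_const ε),
          intervalIntegral.integral_const_mul, intervalIntegral.integral_div]
    _ ≤ ε * (∫ x in Ioi a, u x ^ 2) + (∫ x in Ioi a, v x ^ 2) / ε := by
        gcongr
        exacts [hle_Ioi _ hu2 fun x => sq_nonneg _, hle_Ioi _ hv2 fun x => sq_nonneg _]

theorem integral_deriv_sq_add_integral_potential_mul_sq {w V : ℝ → ℝ} {lam : ℝ}
    (hu : ∀ x ∈ Ici a, HasDerivWithinAt u (v x) (Ici a) x)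
    (hv : ∀ x ∈ Ici a, HasDerivWithinAt v (w x) (Ici a) x) (hua : u a = 0)
    (hode : ∀ x ∈ Ioi a, -w x + V x * u x = lam * u x)
    (hu2 : IntegrableOn (fun x => u x ^ 2) (Ioi a)) (hv2 : IntegrableOn (fun x => v x ^ 2) (Ioi a))
    (hVu2 : IntegrableOn (fun x => V x * u x ^ 2) (Ioi a)) :
    (∫ x in Ioi a, v x ^ 2) + ∫ x in Ioi a, V x * u x ^ 2 = lam * ∫ x in Ioi a, u x ^ 2 := by
  have hderiv : ∀ x ∈ Ioi a, HasDerivAt (fun y => u y * v y)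
      (v x ^ 2 + V x * u x ^ 2 - lam * u x ^ 2) x := fun x hx => by
    have hw : w x = V x * u x - lam * u x := by linarith [hode x hx]
    refine (((hu x (Ioi_subset_Ici_self hx)).hasDerivAt (Ici_mem_nhds hx)).fun_mul
      ((hv x (Ioi_subset_Ici_self hx)).hasDerivAt (Ici_mem_nhds hx))).congr_deriv ?_
    rw [hw]; ring
  have hsum : IntegrableOn (fun x => v x ^ 2 + V x * u x ^ 2) (Ioi a) := hv2.add hVu2
  have hlamu2 : IntegrableOn (fun x => lam * u x ^ 2) (Ioi a) := hu2.const_mul lam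
  have huv : IntegrableOn (fun x => u x * v x) (Ioi a) :=
    integrable_mul_of_integrable_sq
      ((continuousOn_of_hasDerivWithinAt_Ici hu).mono Ioi_subset_Ici_self
        |>.aestronglyMeasurable measurableSet_Ioi)
      ((continuousOn_of_hasDerivWithinAt_Ici hv).mono Ioi_subset_Ici_self
        |>.aestronglyMeasurable measurableSet_Ioi) hu2 hv2
  have hibp := integral_Ioi_of_hasDerivAt_of_integrableOn
    ((hu a self_mem_Ici).continuousWithinAt.mul (hv a self_mem_Ici).continuousWithinAt) hderiv
    (hsum.sub hlamu2) huv
  rw [integral_sub hsum hlamu2, integral_add hv2 hVu2, integral_const_mul,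
    Pi.mul_apply, hua, zero_mul, neg_zero] at hibp
  linarith

end HalfLine

theorem eigenfunction_sup_bound_general (k lam : ℝ) (hlam : 0 ≤ lam) (u v w : ℝ → ℝ)
    (hu : ∀ x ∈ Set.Ici (0:ℝ), HasDerivWithinAt u (v x) (Set.Ici 0) x)
    (hv : ∀ x ∈ Set.Ici (0:ℝ), HasDerivWithinAt v (w x) (Set.Ici 0) x)
    (hu0 : u 0 = 0)
    (hode : ∀ x ≥ (0:ℝ), -w x + (x - k) ^ 2 * u x = lam * u x)
    (hL2u : MeasureTheory.IntegrableOn (fun x => (u x) ^ 2) (Set.Ioi 0))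
    (hL2v : MeasureTheory.IntegrableOn (fun x => (v x) ^ 2) (Set.Ioi 0))
    (hL2xu : MeasureTheory.IntegrableOn (fun x => ((x - k) * u x) ^ 2) (Set.Ioi 0))
    (hnorm : ∫ x in Set.Ioi (0:ℝ), (u x) ^ 2 = 1) :
    (∀ x ≥ (0:ℝ), (u x) ^ 2 ≤ 2 * Real.sqrt (∫ t in Set.Ioi (0:ℝ), (v t) ^ 2)) ∧
    2 * Real.sqrt (∫ t in Set.Ioi (0:ℝ), (v t) ^ 2) ≤ 2 * Real.sqrt lam ∧
    ∀ x ≥ (0:ℝ), |u x| ≤ Real.sqrt 2 * lam ^ ((1:ℝ)/4) := by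
  have hsq : ∀ x ≥ (0:ℝ), u x ^ 2 ≤ 2 * √(∫ t in Ioi (0:ℝ), v t ^ 2) := fun x hx =>
    le_two_sqrt_of_forall_le_add_div (setIntegral_nonneg measurableSet_Ioi fun _ _ => sq_nonneg _)
      fun ε hε => by
        simpa [hnorm] using sq_le_mul_integral_sq_add_div hu
          (continuousOn_of_hasDerivWithinAt_Ici hv) hu0 hL2u hL2v hx hε
  have henergy := integral_deriv_sq_add_integral_potential_mul_sq (V := fun x => (x - k) ^ 2)
    hu hv hu0 (fun x hx => hode x (le_of_lt hx)) hL2u hL2v (by simpa only [mul_pow] using hL2xu)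
  have hv2_le : ∫ t in Ioi (0:ℝ), v t ^ 2 ≤ lam := by
    have hpot : 0 ≤ ∫ x in Ioi (0:ℝ), (x - k) ^ 2 * u x ^ 2 :=
      setIntegral_nonneg measurableSet_Ioi fun x _ => by positivity
    rw [hnorm, mul_one] at henergy
    linarith
  refine ⟨hsq, by gcongr, fun x hx => ?_⟩
  calc |u x| = √(u x ^ 2) := (Real.sqrt_sq_eq_abs _).symm
    _ ≤ √(2 * √lam) := Real.sqrt_le_sqrt (by linarith [hsq x hx, Real.sqrt_le_sqrt hv2_le])
    _ = √2 * lam ^ ((1:ℝ)/4) := by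
      rw [Real.sqrt_mul zero_le_two, Real.sqrt_eq_rpow √lam, Real.sqrt_eq_rpow lam,
        ← Real.rpow_mul hlam]
      norm_num

/-- pointwise bound for a normalized Dirichlet eigenfunction of the shifted
harmonic oscillator on the half-line: `u(x)² ≤ 2 (∫ u'²)^{1/2} ≤ 2 λ^{1/2}`, hence
`sup |u| ≤ 2^{1/2} λ^{1/4}`. -/
theorem eigenfunction_sup_bound (k lam : ℝ) (hlam : 0 ≤ lam) (u v w : ℝ → ℝ)
    (hu : ∀ x ∈ Set.Ici (0:ℝ), HasDerivWithinAt u (v x) (Set.Ici 0) x)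
    (hv : ∀ x ∈ Set.Ici (0:ℝ), HasDerivWithinAt v (w x) (Set.Ici 0) x)
    (hw : ContinuousOn w (Set.Ici 0))
    (hu0 : u 0 = 0)
    (hode : ∀ x ≥ (0:ℝ), -w x + (x - k) ^ 2 * u x = lam * u x)
    (hL2u : MeasureTheory.IntegrableOn (fun x => (u x) ^ 2) (Set.Ioi 0))
    (hL2v : MeasureTheory.IntegrableOn (fun x => (v x) ^ 2) (Set.Ioi 0))
    (hL2xu : MeasureTheory.IntegrableOn (fun x => ((x - k) * u x) ^ 2) (Set.Ioi 0))
    (hnorm : ∫ x in Set.Ioi (0:ℝ), (u x) ^ 2 = 1) :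
    (∀ x ≥ (0:ℝ), (u x) ^ 2 ≤ 2 * Real.sqrt (∫ t in Set.Ioi (0:ℝ), (v t) ^ 2)) ∧
    2 * Real.sqrt (∫ t in Set.Ioi (0:ℝ), (v t) ^ 2) ≤ 2 * Real.sqrt lam ∧
    ∀ x ≥ (0:ℝ), |u x| ≤ Real.sqrt 2 * lam ^ ((1:ℝ)/4) :=
  eigenfunction_sup_bound_general k lam hlam u v w hu hv hu0 hode hL2u hL2v hL2xu hnorm
end

section
/- Let λ : ℝ → ℝ be a differentiable function with λ(k) > 0 for all k, and suppose that −λ'(k) ≤ 2 √(λ(k)) for all k ≤ 0. Then for every k ≤ 0 one has λ(k) ≤ (√(λ(0)) − k)². -/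
/-!
Since `(√λ)' = λ' / (2√λ) ≥ -1` for `k ≤ 0`, the function `k ↦ √λ(k) + k` is nondecreasing on
`(-∞, 0]`; comparing `k` with `0` gives `√λ(k) ≤ √λ(0) - k`, and squaring gives the bound.
-/

open Set

theorem monotoneOn_sqrt_add_id {lam lam' : ℝ → ℝ} {s : Set ℝ} (hs : Convex ℝ s)
    (hderiv : ∀ k, HasDerivAt lam (lam' k) k) (hpos : ∀ k, 0 < lam k)
    (hineq : ∀ k ∈ interior s, -lam' k ≤ 2 * √(lam k)) :
    MonotoneOn (fun k => √(lam k) + k) s := by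
  have hderiv_sqrt_add : ∀ k,
      HasDerivAt (fun k => √(lam k) + k) (lam' k / (2 * √(lam k)) + 1) k := fun k =>
    ((hderiv k).sqrt (hpos k).ne').add (hasDerivAt_id k)
  refine monotoneOn_of_hasDerivWithinAt_nonneg hs
    (fun k _ => (hderiv_sqrt_add k).continuousAt.continuousWithinAt)
    (fun k _ => (hderiv_sqrt_add k).hasDerivWithinAt) fun k hk => ?_
  have hden : 0 < 2 * √(lam k) := by have := Real.sqrt_pos.2 (hpos k); positivity
  have hslope : -1 ≤ lam' k / (2 * √(lam k)) := by
    rw [le_div_iff₀ hden]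
    linarith [hineq k hk]
  linarith [hslope]

/-- if λ > 0 is differentiable with `-λ'(k) ≤ 2√(λ(k))` for k ≤ 0, then
`λ(k) ≤ (√(λ(0)) - k)²` for every k ≤ 0. -/
theorem band_function_growth_bound (lam lam' : ℝ → ℝ)
    (hderiv : ∀ k, HasDerivAt lam (lam' k) k)
    (hpos : ∀ k, 0 < lam k)
    (hineq : ∀ k ≤ (0:ℝ), -lam' k ≤ 2 * Real.sqrt (lam k)) :
    ∀ k ≤ (0:ℝ), lam k ≤ (Real.sqrt (lam 0) - k) ^ 2 := by
  intro k hk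
  have hmono : MonotoneOn (fun k => √(lam k) + k) (Iic 0) :=
    monotoneOn_sqrt_add_id (convex_Iic 0) hderiv hpos fun x hx =>
      hineq x (interior_subset (s := Iic 0) hx)
  have hle : √(lam k) + k ≤ √(lam 0) + 0 := hmono hk self_mem_Iic hk
  exact (Real.sqrt_le_iff.mp (by linarith : √(lam k) ≤ √(lam 0) - k)).2
end

section
/- Let a ∈ ℝ, let q : [a,∞) → ℝ be continuous with q(x) ≥ 0 for all x ≥ a, and let u : [a,∞) → ℝ be differentiable, with u(x) u'(x) < 0 and u'(x)² ≥ q(x) u(x)² for all x > a. Then for every x ≥ a one has |u(x)| ≤ |u(a)| exp( − ∫_a^x √(q(t)) dt ). -/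
open Filter Set intervalIntegral

private lemma agmon_aux (a : ℝ) (q u v : ℝ → ℝ)
    (hqcont : ContinuousOn q (Set.Ici a)) (hqpos : ∀ x ≥ a, 0 ≤ q x)
    (hucont : ContinuousOn u (Set.Ici a))
    (hderiv : ∀ x > a, HasDerivAt u (v x) x)
    (hpos : ∀ x > a, 0 < u x)
    (hneg : ∀ x > a, v x < 0)
    (hineq : ∀ x > a, q x * (u x) ^ 2 ≤ (v x) ^ 2) :
    ∀ x ≥ a, u x ≤ u a * Real.exp (-∫ t in a..x, Real.sqrt (q t)) := by
  intro x hx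
  set f : ℝ → ℝ := fun t => Real.sqrt (q t) with hf
  have hsq : ContinuousOn f (Set.Ici a) := hqcont.sqrt
  rcases eq_or_lt_of_le hx with rfl | hax
  · simp
  set Q : ℝ → ℝ := fun y => ∫ t in a..y, f t with hQ
  set F : ℝ → ℝ := fun y => u y * Real.exp (Q y) with hF
  have hQcont : ContinuousOn Q (Set.Icc a x) := by
    have : MeasureTheory.IntegrableOn f (Set.uIcc a x) := by
      rw [Set.uIcc_of_le hx]
      exact (hsq.mono Set.Icc_subset_Ici_self).integrableOn_Icc
    simpa [Set.uIcc_of_le hx] using continuousOn_primitive_interval this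
  have hQderiv : ∀ y > a, HasDerivAt Q (f y) y := by
    intro y hy
    refine integral_hasDerivAt_right ?_ ?_ ?_
    · exact (hsq.mono (by rw [Set.uIcc_of_le hy.le]; exact Set.Icc_subset_Ici_self)).intervalIntegrable
    · exact ContinuousOn.stronglyMeasurableAtFilter isOpen_Ioi
        (hsq.mono Set.Ioi_subset_Ici_self) y hy
    · exact (hsq.mono Set.Ioi_subset_Ici_self).continuousAt (Ioi_mem_nhds hy)
  have hFanti : AntitoneOn F (Set.Icc a x) := by
    have hFcont : ContinuousOn F (Set.Icc a x) :=
      (hucont.mono Set.Icc_subset_Ici_self).mul (Real.continuous_exp.comp_continuousOn hQcont)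
    have hint : interior (Set.Icc a x) = Set.Ioo a x := interior_Icc
    have hFd : ∀ y ∈ Set.Ioo a x,
        HasDerivAt F (v y * Real.exp (Q y) + u y * (Real.exp (Q y) * f y)) y := by
      intro y hy
      exact (hderiv y hy.1).mul ((Real.hasDerivAt_exp (Q y)).comp y (hQderiv y hy.1))
    refine antitoneOn_of_deriv_nonpos (convex_Icc a x) hFcont ?_ ?_
    · intro y hy
      rw [hint] at hy
      exact ((hFd y hy).differentiableAt).differentiableWithinAt
    · intro y hy
      rw [hint] at hy
      rw [(hFd y hy).deriv]
      have hy1 := hy.1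
      have h2 : u y * f y ≤ Real.sqrt ((v y) ^ 2) := by
        have : u y * f y = Real.sqrt (q y * (u y) ^ 2) := by
          rw [Real.sqrt_mul (hqpos y hy1.le), Real.sqrt_sq (hpos y hy1).le]; ring
        rw [this]
        exact Real.sqrt_le_sqrt (hineq y hy1)
      have h3 : Real.sqrt ((v y) ^ 2) = -v y := by
        rw [Real.sqrt_sq_eq_abs, abs_of_neg (hneg y hy1)]
      have hkey : v y + u y * f y ≤ 0 := by linarith [h2, h3.le]
      have hE : (0:ℝ) < Real.exp (Q y) := Real.exp_pos _
      have heq : v y * Real.exp (Q y) + u y * (Real.exp (Q y) * f y)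
          = (v y + u y * f y) * Real.exp (Q y) := by ring
      rw [heq]
      exact mul_nonpos_of_nonpos_of_nonneg hkey hE.le
  have hFx : F x ≤ F a :=
    hFanti (Set.left_mem_Icc.2 hx) (Set.right_mem_Icc.2 hx) hx
  have hFa : F a = u a := by simp [hF, hQ]
  have hle : u x * Real.exp (Q x) ≤ u a := hFa ▸ hFx
  calc u x = (u x * Real.exp (Q x)) * Real.exp (-Q x) := by
        rw [mul_assoc, ← Real.exp_add]; simp
    _ ≤ u a * Real.exp (-Q x) :=
        mul_le_mul_of_nonneg_right hle (Real.exp_pos _).le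

/-- Agmon-type decay: if u u' < 0 and u'² ≥ q u² on (a,∞) with q ≥ 0
continuous, then `|u(x)| ≤ |u(a)| exp(-∫_a^x √(q(t)) dt)`. -/
theorem agmon_decay_from_differential_inequality (a : ℝ) (q u v : ℝ → ℝ)
    (hqcont : ContinuousOn q (Set.Ici a)) (hqpos : ∀ x ≥ a, 0 ≤ q x)
    (hucont : ContinuousOn u (Set.Ici a))
    (hderiv : ∀ x > a, HasDerivAt u (v x) x)
    (hsign : ∀ x > a, u x * v x < 0)
    (hineq : ∀ x > a, q x * (u x) ^ 2 ≤ (v x) ^ 2) :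
    ∀ x ≥ a, |u x| ≤ |u a| * Real.exp (-∫ t in a..x, Real.sqrt (q t)) := by
  have hne : ∀ x > a, u x ≠ 0 := by
    intro x hx h
    have := hsign x hx
    rw [h] at this; simp at this
  have hconst : (∀ x > a, 0 < u x) ∨ (∀ x > a, u x < 0) := by
    by_contra h
    push_neg at h
    obtain ⟨⟨b, hb, hub⟩, ⟨c, hc, huc⟩⟩ := h
    have hub' : u b < 0 := lt_of_le_of_ne hub (hne b hb)
    have huc' : 0 < u c := lt_of_le_of_ne huc (Ne.symm (hne c hc))
    have hsub : Set.uIcc b c ⊆ Set.Ici a := by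
      intro t ht
      rcases Set.mem_uIcc.1 ht with ⟨h1, _⟩ | ⟨h1, _⟩
      · exact le_trans hb.le h1
      · exact le_trans hc.le h1
    have hcont' : ContinuousOn u (Set.uIcc b c) := hucont.mono hsub
    have h0 : (0:ℝ) ∈ Set.uIcc (u b) (u c) :=
      Set.mem_uIcc.2 (Or.inl ⟨hub'.le, huc'.le⟩)
    obtain ⟨z, hz, hz0⟩ := intermediate_value_uIcc hcont' h0
    have hza : a < z := by
      rcases Set.mem_uIcc.1 hz with ⟨h1, _⟩ | ⟨h1, _⟩
      · exact lt_of_lt_of_le hb h1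
      · exact lt_of_lt_of_le hc h1
    exact hne z hza hz0
  rcases hconst with hp | hn
  · -- u positive on Ioi a
    have hv : ∀ y > a, v y < 0 := fun y hy => by nlinarith [hsign y hy, hp y hy]
    have hua : 0 ≤ u a := by
      have ht : Tendsto u (nhdsWithin a (Set.Ioi a)) (nhds (u a)) :=
        ((hucont a Set.self_mem_Ici).mono Set.Ioi_subset_Ici_self).tendsto
      refine ge_of_tendsto ht ?_
      filter_upwards [self_mem_nhdsWithin] with y hy using (hp y hy).le
    have habs : ∀ x ≥ a, |u x| = u x := by
      intro x hx
      rcases eq_or_lt_of_le hx with rfl | hax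
      · exact abs_of_nonneg hua
      · exact abs_of_pos (hp x hax)
    intro x hx
    rw [habs x hx, habs a le_rfl]
    exact agmon_aux a q u v hqcont hqpos hucont hderiv hp hv hineq x hx
  · -- u negative on Ioi a; apply aux to -u, -v
    have hp' : ∀ x > a, 0 < (fun t => -u t) x := fun x hx => by
      simpa using (hn x hx)
    have hv : ∀ y > a, (fun t => -v t) y < 0 := fun y hy => by
      have := hsign y hy
      have hny := hn y hy
      simp only
      nlinarith
    have hua : u a ≤ 0 := by
      have ht : Tendsto u (nhdsWithin a (Set.Ioi a)) (nhds (u a)) :=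
        ((hucont a Set.self_mem_Ici).mono Set.Ioi_subset_Ici_self).tendsto
      refine le_of_tendsto ht ?_
      filter_upwards [self_mem_nhdsWithin] with y hy using (hn y hy).le
    have habs : ∀ x ≥ a, |u x| = -u x := by
      intro x hx
      rcases eq_or_lt_of_le hx with rfl | hax
      · exact abs_of_nonpos hua
      · exact abs_of_neg (hn x hax)
    intro x hx
    rw [habs x hx, habs a le_rfl]
    have := agmon_aux a q (fun t => -u t) (fun t => -v t) hqcont hqpos
      (hucont.neg) (fun y hy => (hderiv y hy).neg) hp' hv
      (fun y hy => by simpa using hineq y hy) x hx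
    simpa using this
end

section
/- Let a ∈ ℝ and let q : [a,∞) → ℝ be continuously differentiable with q(x) ≥ 0 and q'(x) ≥ 0 for all x ≥ a. Let u : [a,∞) → ℝ be a C² function satisfying u''(x) = q(x) u(x) for all x ≥ a, with u, u' ∈ L²(a,∞) and q(x) u(x)² → 0 as x → +∞. Then u'(t)² ≥ q(t) u(t)² for every t ≥ a. -/
open Filter Set Topology

/-!
The energy `E = u'² - q u²` has derivative `2 u' u'' - q' u² - 2 q u u' = -q' u² ≤ 0`, so it is
nonincreasing on `[a, ∞)`. As `E ≥ -q u²` and `q u² → 0` at infinity, the values of `E` cannot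
drop below `0`.
-/

theorem AntitoneOn.le_of_tendsto_of_le {α β : Type*} [LinearOrder α] [TopologicalSpace β]
    [Preorder β] [ClosedIicTopology β] {a t : α} {F g : α → β} {l : β}
    (hF : AntitoneOn F (Ici a)) (hg : Tendsto g atTop (𝓝 l)) (hgF : ∀ x ≥ a, g x ≤ F x)
    (ht : a ≤ t) : l ≤ F t :=
  haveI : Nonempty α := ⟨t⟩
  le_of_tendsto hg <| eventually_atTop.2 ⟨t, fun x hx =>
    (hgF x (ht.trans hx)).trans (hF ht (ht.trans hx) hx)⟩

theorem antitoneOn_Ici_of_hasDerivWithinAt_nonpos {a : ℝ} {f f' : ℝ → ℝ}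
    (hf : ∀ x ∈ Ici a, HasDerivWithinAt f (f' x) (Ici a) x) (hf' : ∀ x > a, f' x ≤ 0) :
    AntitoneOn f (Ici a) := by
  refine antitoneOn_of_hasDerivWithinAt_nonpos (f' := f') (convex_Ici a)
    (fun x hx => (hf x hx).continuousWithinAt) (fun x hx => ?_) (fun x hx => ?_)
  · rw [interior_Ici] at hx ⊢
    exact (hf x (mem_Ici.2 (le_of_lt hx))).mono Ioi_subset_Ici_self
  · rw [interior_Ici] at hx
    exact hf' x hx

theorem HasDerivWithinAt.sq_sub_mul_sq {s : Set ℝ} {x : ℝ} {q u v : ℝ → ℝ} {q' w : ℝ}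
    (hq : HasDerivWithinAt q q' s x) (hu : HasDerivWithinAt u (v x) s x)
    (hv : HasDerivWithinAt v w s x) (hode : w = q x * u x) :
    HasDerivWithinAt (fun y => v y ^ 2 - q y * u y ^ 2) (-(q' * u x ^ 2)) s x := by
  refine ((hv.pow 2).sub (hq.mul (hu.pow 2))).congr_deriv ?_
  simp only [Pi.pow_apply, hode]
  ring

theorem derivative_dominates_potential_general (a : ℝ) (q q' u v w : ℝ → ℝ)
    (hq : ∀ x ∈ Set.Ici a, HasDerivWithinAt q (q' x) (Set.Ici a) x)
    (hq'pos : ∀ x ≥ a, 0 ≤ q' x)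
    (hu : ∀ x ∈ Set.Ici a, HasDerivWithinAt u (v x) (Set.Ici a) x)
    (hv : ∀ x ∈ Set.Ici a, HasDerivWithinAt v (w x) (Set.Ici a) x)
    (hode : ∀ x ≥ a, w x = q x * u x)
    (hlim : Filter.Tendsto (fun x => q x * (u x) ^ 2) Filter.atTop (nhds 0)) :
    ∀ t ≥ a, q t * (u t) ^ 2 ≤ (v t) ^ 2 := by
  intro t ht
  have hE : AntitoneOn (fun x => v x ^ 2 - q x * u x ^ 2) (Ici a) :=
    antitoneOn_Ici_of_hasDerivWithinAt_nonpos
      (fun x hx => (hq x hx).sq_sub_mul_sq (hu x hx) (hv x hx) (hode x hx))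
      (fun x hx => neg_nonpos.2 (mul_nonneg (hq'pos x hx.le) (sq_nonneg _)))
  have hlim' : Tendsto (fun x => -(q x * u x ^ 2)) atTop (𝓝 0) := by
    simpa using hlim.neg
  have hEt := hE.le_of_tendsto_of_le hlim' (fun x _ => by linarith [sq_nonneg (v x)]) ht
  linarith

/-- for a solution of `u'' = q u` on [a,∞) with q ≥ 0 nondecreasing (q' ≥ 0),
u, u' ∈ L²(a,∞), and `q u² → 0` at +∞, one has `u'(t)² ≥ q(t) u(t)²` for every t ≥ a. -/
theorem derivative_dominates_potential (a : ℝ) (q q' u v w : ℝ → ℝ)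
    (hq : ∀ x ∈ Set.Ici a, HasDerivWithinAt q (q' x) (Set.Ici a) x)
    (hq'cont : ContinuousOn q' (Set.Ici a))
    (hqpos : ∀ x ≥ a, 0 ≤ q x) (hq'pos : ∀ x ≥ a, 0 ≤ q' x)
    (hu : ∀ x ∈ Set.Ici a, HasDerivWithinAt u (v x) (Set.Ici a) x)
    (hv : ∀ x ∈ Set.Ici a, HasDerivWithinAt v (w x) (Set.Ici a) x)
    (hwcont : ContinuousOn w (Set.Ici a))
    (hode : ∀ x ≥ a, w x = q x * u x)
    (hL2u : MeasureTheory.IntegrableOn (fun x => (u x) ^ 2) (Set.Ioi a))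
    (hL2v : MeasureTheory.IntegrableOn (fun x => (v x) ^ 2) (Set.Ioi a))
    (hlim : Filter.Tendsto (fun x => q x * (u x) ^ 2) Filter.atTop (nhds 0)) :
    ∀ t ≥ a, q t * (u t) ^ 2 ≤ (v t) ^ 2 :=
  derivative_dominates_potential_general a q q' u v w hq hq'pos hu hv hode hlim
end

section
/- Let k ≤ 0, λ > 0, and let u : [0,∞) → ℝ be a C² function with u(0) = 0 satisfying −u''(x) + (x−k)² u(x) = λ u(x) for all x ≥ 0, with u, u' ∈ L²(0,∞) and ∫₀^∞ u(x)² dx = 1. Let x₀ > 0 be such that λ ≤ (x₀ − k)². Then for every x ≥ x₀ one has |u(x)| ≤ 2^{1/2} λ^{1/4} exp( − ∫_{x₀}^x ((t−k)² − λ)^{1/2} dt ). -/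
/-!
Write `q x = (x - k)² - λ`, so that `u'' = q u`, and `q ≥ 0`, `q' ≥ 0` on `[x₀, ∞)`.
There `(u u')' = u'² + q u² ≥ 0`, so a positive value of `u u'` would make `u²` grow linearly,
contradicting `u ∈ L²`: hence `u u' ≤ 0`. The energy `u'² - q u²` is nonincreasing; were it
negative somewhere, `(u u')'` would stay above a positive constant and `u u'` would become
positive: hence `√q |u| ≤ |u'|`. Thus `(u²)' ≤ -2 √q u²`, and Grönwall's argument gives
`u(x)² ≤ u(x₀)² exp(-2 ∫_{x₀}^x √q)`. On `[0, x₀]`, integrating `(u u')' = u'² + q u²` with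
`u(0) = 0` and `u(x₀) u'(x₀) ≤ 0` gives `∫ u'² ≤ λ ∫ u²`, so
`u(x₀)² = ∫ 2 u u' ≤ √λ ∫ u² + ∫ u'² / √λ ≤ 2 √λ`.
-/

open MeasureTheory Set intervalIntegral Real

lemma monotoneOn_Ici_of_hasDerivAt_nonneg {f f' : ℝ → ℝ} {a : ℝ}
    (hf : ∀ x ≥ a, HasDerivAt f (f' x) x) (hf' : ∀ x > a, 0 ≤ f' x) : MonotoneOn f (Ici a) :=
  monotoneOn_of_hasDerivWithinAt_nonneg (convex_Ici a)
    (fun x hx => (hf x hx).continuousAt.continuousWithinAt)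
    (fun x hx => by rw [interior_Ici] at hx; exact (hf x hx.le).hasDerivWithinAt)
    (fun x hx => by rw [interior_Ici] at hx; exact hf' x hx)

lemma antitoneOn_Ici_of_hasDerivAt_nonpos {f f' : ℝ → ℝ} {a : ℝ}
    (hf : ∀ x ≥ a, HasDerivAt f (f' x) x) (hf' : ∀ x > a, f' x ≤ 0) : AntitoneOn f (Ici a) :=
  antitoneOn_of_hasDerivWithinAt_nonpos (convex_Ici a)
    (fun x hx => (hf x hx).continuousAt.continuousWithinAt)
    (fun x hx => by rw [interior_Ici] at hx; exact (hf x hx.le).hasDerivWithinAt)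
    (fun x hx => by rw [interior_Ici] at hx; exact hf' x hx)

lemma mul_sub_le_sub_of_le_hasDerivAt {f f' : ℝ → ℝ} {a c : ℝ}
    (hf : ∀ x ≥ a, HasDerivAt f (f' x) x) (hc : ∀ x > a, c ≤ f' x) {x : ℝ} (hx : a ≤ x) :
    c * (x - a) ≤ f x - f a := by
  have hmono := monotoneOn_Ici_of_hasDerivAt_nonneg (f := fun t => f t - c * t)
    (fun t ht => (hf t ht).sub ((hasDerivAt_id t).const_mul c))
    (fun t ht => by simpa using hc t ht)
  have := hmono self_mem_Ici hx hx
  simp only at this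
  linarith

lemma not_integrableOn_Ici_of_le {f : ℝ → ℝ} {a c : ℝ} (hc : 0 < c) (hf : ∀ x ≥ a, c ≤ f x) :
    ¬ IntegrableOn f (Ici a) := by
  intro hint
  have hconst : IntegrableOn (fun _ => c) (Ici a) :=
    hint.mono' aestronglyMeasurable_const <| (ae_restrict_iff' measurableSet_Ici).2 <|
      ae_of_all _ fun x hx => by rw [Real.norm_of_nonneg hc.le]; exact hf x hx
  simp [integrableOn_const_iff, hc.ne'] at hconst

lemma mul_le_neg_sqrt_mul_sq {a b c : ℝ} (hab : a * b ≤ 0) (h : c * a ^ 2 ≤ b ^ 2) :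
    a * b ≤ -(√c * a ^ 2) := by
  have hsqrt : √c * |a| ≤ |b| := by
    simpa [Real.sqrt_mul' _ (sq_nonneg a), Real.sqrt_sq_eq_abs] using Real.sqrt_le_sqrt h
  calc a * b = -(|a| * |b|) := by rw [← abs_mul, abs_of_nonpos hab, neg_neg]
    _ ≤ -(|a| * (√c * |a|)) := by gcongr
    _ = -(√c * a ^ 2) := by rw [← sq_abs a]; ring

lemma mul_le_zero_of_integrableOn_sq {u v q : ℝ → ℝ} {a : ℝ}
    (hu : ∀ x ≥ a, HasDerivAt u (v x) x) (hv : ∀ x ≥ a, HasDerivAt v (q x * u x) x)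
    (hq : ∀ x ≥ a, 0 ≤ q x) (hL2 : IntegrableOn (fun x => u x ^ 2) (Ici a)) :
    ∀ x ≥ a, u x * v x ≤ 0 := by
  intro x₁ hx₁
  by_contra! hpos
  have hu₁ : ∀ t ≥ x₁, HasDerivAt u (v t) t := fun t ht => hu t (hx₁.trans ht)
  have huv : ∀ x ≥ x₁, u x₁ * v x₁ ≤ u x * v x := fun x hx => by
    have := mul_sub_le_sub_of_le_hasDerivAt (c := 0) (f := fun t => u t * v t)
      (fun t ht => (hu₁ t ht).mul (hv t (hx₁.trans ht)))
      (fun t ht => by nlinarith [mul_nonneg (hq t (by linarith)) (mul_self_nonneg (u t))]) hx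
    linarith
  have hgrow : ∀ x ≥ x₁ + 1, 2 * (u x₁ * v x₁) ≤ u x ^ 2 := fun x hx => by
    have := mul_sub_le_sub_of_le_hasDerivAt (c := 2 * (u x₁ * v x₁)) (f := fun t => u t * u t)
      (fun t ht => (hu₁ t ht).mul (hu₁ t ht)) (fun t ht => by linarith [huv t ht.le])
      (by linarith : x₁ ≤ x)
    nlinarith [sq_nonneg (u x₁)]
  exact not_integrableOn_Ici_of_le (by linarith) hgrow
    (hL2.mono_set (Ici_subset_Ici.2 (by linarith)))

lemma mul_sq_le_sq_of_integrableOn_sq {u v q q' : ℝ → ℝ} {a : ℝ}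
    (hu : ∀ x ≥ a, HasDerivAt u (v x) x) (hv : ∀ x ≥ a, HasDerivAt v (q x * u x) x)
    (hq : ∀ x ≥ a, HasDerivAt q (q' x) x) (hq₀ : ∀ x ≥ a, 0 ≤ q x) (hq' : ∀ x ≥ a, 0 ≤ q' x)
    (hL2 : IntegrableOn (fun x => u x ^ 2) (Ici a)) :
    ∀ x ≥ a, q x * u x ^ 2 ≤ v x ^ 2 := by
  have huv := mul_le_zero_of_integrableOn_sq hu hv hq₀ hL2
  intro x₁ hx₁
  by_contra! hneg
  set ε := q x₁ * u x₁ ^ 2 - v x₁ ^ 2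
  have hεpos : 0 < ε := by linarith
  have hu₁ : ∀ t ≥ x₁, HasDerivAt u (v t) t := fun t ht => hu t (hx₁.trans ht)
  have hv₁ : ∀ t ≥ x₁, HasDerivAt v (q t * u t) t := fun t ht => hv t (hx₁.trans ht)
  -- the energy `v² - q u²` has derivative `-q' u² ≤ 0`
  have henergy : ∀ x ≥ x₁, v x * v x - q x * (u x * u x) ≤ -ε := fun x hx => by
    have hanti := antitoneOn_Ici_of_hasDerivAt_nonpos
      (f := fun t => v t * v t - q t * (u t * u t))
      (fun t ht => ((hv₁ t ht).mul (hv₁ t ht)).sub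
        ((hq t (hx₁.trans ht)).mul ((hu₁ t ht).mul (hu₁ t ht))))
      (fun t ht => by nlinarith [mul_nonneg (hq' t (by linarith)) (mul_self_nonneg (u t))])
    have := hanti self_mem_Ici hx hx
    simp only at this
    nlinarith
  have hgrow : ∀ x ≥ x₁, ε * (x - x₁) ≤ u x * v x - u x₁ * v x₁ := fun x hx =>
    mul_sub_le_sub_of_le_hasDerivAt (f := fun t => u t * v t)
      (fun t ht => (hu₁ t ht).mul (hv₁ t ht))
      (fun t ht => by nlinarith [henergy t ht.le, mul_self_nonneg (v t)]) hx
  set X := x₁ + (1 - u x₁ * v x₁) / ε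
  have hX : ε * (X - x₁) = 1 - u x₁ * v x₁ := by simp only [X]; field_simp; ring
  have hx₁X : x₁ ≤ X := le_add_of_nonneg_right <| div_nonneg (by linarith [huv x₁ hx₁]) hεpos.le
  linarith [hgrow X hx₁X, huv X (hx₁.trans hx₁X)]

lemma le_mul_exp_neg_integral_of_hasDerivAt_le {f f' p : ℝ → ℝ} {a : ℝ}
    (hf : ∀ x ≥ a, HasDerivAt f (f' x) x) (hp : Continuous p)
    (hf' : ∀ x ≥ a, f' x ≤ -(p x * f x)) :
    ∀ x ≥ a, f x ≤ f a * exp (-∫ t in a..x, p t) := by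
  have hanti := antitoneOn_Ici_of_hasDerivAt_nonpos
    (f := fun x => f x * exp (∫ t in a..x, p t))
    (fun x hx => (hf x hx).mul (hp.integral_hasStrictDerivAt a x).hasDerivAt.exp)
    (fun x hx => by
      nlinarith [mul_le_mul_of_nonneg_right (hf' x hx.le) (exp_pos (∫ t in a..x, p t)).le])
  intro x hx
  have := hanti self_mem_Ici hx hx
  simp only [integral_same, exp_zero, mul_one] at this
  rwa [exp_neg, ← div_eq_mul_inv, le_div_iff₀ (exp_pos _)]

lemma sq_le_sq_mul_exp_neg_integral_sqrt {u v q q' : ℝ → ℝ} {a : ℝ}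
    (hu : ∀ x ≥ a, HasDerivAt u (v x) x) (hv : ∀ x ≥ a, HasDerivAt v (q x * u x) x)
    (hq : ∀ x ≥ a, HasDerivAt q (q' x) x) (hqc : Continuous q) (hq₀ : ∀ x ≥ a, 0 ≤ q x)
    (hq' : ∀ x ≥ a, 0 ≤ q' x) (hL2 : IntegrableOn (fun x => u x ^ 2) (Ici a)) :
    ∀ x ≥ a, u x ^ 2 ≤ u a ^ 2 * exp (-(2 * ∫ t in a..x, √(q t))) := by
  have huv := mul_le_zero_of_integrableOn_sq hu hv hq₀ hL2
  have hqu := mul_sq_le_sq_of_integrableOn_sq hu hv hq hq₀ hq' hL2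
  simpa only [intervalIntegral.integral_const_mul, sq] using
    le_mul_exp_neg_integral_of_hasDerivAt_le (f := fun x => u x * u x)
      (fun x hx => (hu x hx).mul (hu x hx)) (hqc.sqrt.const_mul 2) fun x hx => by
        nlinarith [mul_le_neg_sqrt_mul_sq (huv x hx) (hqu x hx)]

lemma sq_le_two_sqrt_mul_integral_sq {u v q : ℝ → ℝ} {a b lam : ℝ} (hab : a ≤ b)
    (hlam : 0 < lam) (hu : ∀ x ∈ Icc a b, HasDerivWithinAt u (v x) (Icc a b) x)
    (hv : ∀ x ∈ Icc a b, HasDerivWithinAt v (q x * u x) (Icc a b) x)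
    (hq : ContinuousOn q (Icc a b)) (hqlam : ∀ x ∈ Icc a b, -lam ≤ q x) (hua : u a = 0)
    (huv : u b * v b ≤ 0) :
    u b ^ 2 ≤ 2 * √lam * ∫ x in a..b, u x ^ 2 := by
  rw [← uIcc_of_le hab] at hu hv hq
  have hcu : ContinuousOn u (uIcc a b) := fun x hx => (hu x hx).continuousWithinAt
  have hcv : ContinuousOn v (uIcc a b) := fun x hx => (hv x hx).continuousWithinAt
  have hIuu : ∫ x in a..b, (v x * u x + u x * v x) = u b ^ 2 := by
    rw [integral_deriv_mul_eq_sub_of_hasDerivWithinAt hu hu hcv.intervalIntegrable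
      hcv.intervalIntegrable, hua]
    ring
  have hIuv : ∫ x in a..b, (v x * v x + u x * (q x * u x)) = u b * v b := by
    rw [integral_deriv_mul_eq_sub_of_hasDerivWithinAt hu hv hcv.intervalIntegrable
      (hq.mul hcu).intervalIntegrable, hua]
    ring
  have hu2 : IntervalIntegrable (fun x => u x ^ 2) volume a b := (hcu.pow 2).intervalIntegrable
  have hv2 : IntervalIntegrable (fun x => v x ^ 2) volume a b := (hcv.pow 2).intervalIntegrable
  have hIv : ∫ x in a..b, v x ^ 2 ≤ lam * ∫ x in a..b, u x ^ 2 := by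
    rw [← intervalIntegral.integral_const_mul, ← sub_nonpos,
      ← integral_sub hv2 (hu2.const_mul lam)]
    calc ∫ x in a..b, (v x ^ 2 - lam * u x ^ 2)
        ≤ ∫ x in a..b, (v x * v x + u x * (q x * u x)) :=
          integral_mono_on hab (hv2.sub (hu2.const_mul lam))
            (hcv.mul hcv |>.add (hcu.mul (hq.mul hcu)) |>.intervalIntegrable) fun x hx => by
              nlinarith [mul_nonneg (by linarith [hqlam x hx] : 0 ≤ q x + lam) (sq_nonneg (u x))]
      _ ≤ 0 := hIuv ▸ huv
  have hs : 0 < √lam := sqrt_pos.2 hlam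
  -- `2 u v ≤ √λ u² + v² / √λ` is `(√λ u - v)² ≥ 0`
  have hamgm : ∀ x, v x * u x + u x * v x ≤ √lam * u x ^ 2 + v x ^ 2 / √lam := fun x => by
    rw [← sub_nonneg]
    have : √lam * u x ^ 2 + v x ^ 2 / √lam - (v x * u x + u x * v x)
        = (√lam * u x - v x) ^ 2 / √lam := by field_simp; ring
    rw [this]; positivity
  calc u b ^ 2 = ∫ x in a..b, (v x * u x + u x * v x) := hIuu.symm
    _ ≤ ∫ x in a..b, (√lam * u x ^ 2 + v x ^ 2 / √lam) :=
        integral_mono_on hab (hcv.mul hcu |>.add (hcu.mul hcv) |>.intervalIntegrable)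
          ((hu2.const_mul _).add (hv2.div_const _)) fun x _ => hamgm x
    _ = √lam * (∫ x in a..b, u x ^ 2) + (∫ x in a..b, v x ^ 2) / √lam := by
        rw [integral_add (hu2.const_mul _) (hv2.div_const _), intervalIntegral.integral_const_mul,
          intervalIntegral.integral_div]
    _ ≤ √lam * (∫ x in a..b, u x ^ 2) + (lam * ∫ x in a..b, u x ^ 2) / √lam := by gcongr
    _ = 2 * √lam * ∫ x in a..b, u x ^ 2 := by
        field_simp; rw [sq_sqrt hlam.le]; ring

lemma sq_sqrt_two_mul_rpow_mul_exp {lam : ℝ} (hlam : 0 ≤ lam) (I : ℝ) :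
    (√2 * lam ^ ((1:ℝ)/4) * exp (-I)) ^ 2 = 2 * √lam * exp (-(2 * I)) := by
  rw [mul_pow, mul_pow, sq_sqrt zero_le_two, ← rpow_natCast, ← rpow_mul hlam, sqrt_eq_rpow,
    ← exp_nat_mul]
  norm_num

theorem eigenfunction_agmon_decay_general (k lam : ℝ) (hk : k ≤ 0) (hlam : 0 < lam)
    (u v w : ℝ → ℝ)
    (hu : ∀ x ∈ Set.Ici (0:ℝ), HasDerivWithinAt u (v x) (Set.Ici 0) x)
    (hv : ∀ x ∈ Set.Ici (0:ℝ), HasDerivWithinAt v (w x) (Set.Ici 0) x)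
    (hu0 : u 0 = 0)
    (hode : ∀ x ≥ (0:ℝ), -w x + (x - k) ^ 2 * u x = lam * u x)
    (hL2u : MeasureTheory.IntegrableOn (fun x => (u x) ^ 2) (Set.Ioi 0))
    (hnorm : ∫ x in Set.Ioi (0:ℝ), (u x) ^ 2 = 1)
    (x₀ : ℝ) (hx₀ : 0 < x₀) (hx₀lam : lam ≤ (x₀ - k) ^ 2) :
    ∀ x ≥ x₀, |u x| ≤ Real.sqrt 2 * lam ^ ((1:ℝ)/4)
      * Real.exp (-∫ t in x₀..x, Real.sqrt ((t - k) ^ 2 - lam)) := by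
  set q : ℝ → ℝ := fun t => (t - k) ^ 2 - lam
  have hqc : Continuous q := by fun_prop
  have hv' : ∀ x ∈ Ici (0:ℝ), HasDerivWithinAt v (q x * u x) (Ici 0) x := fun x hx => by
    convert hv x hx using 1; linarith [hode x hx]
  have hIcc : Icc 0 x₀ ⊆ Ici 0 := Icc_subset_Ici_self
  have hinterior : ∀ x ≥ x₀, Ici (0:ℝ) ∈ nhds x := fun x hx => Ici_mem_nhds (hx₀.trans_le hx)
  have hux : ∀ x ≥ x₀, HasDerivAt u (v x) x := fun x hx =>
    (hu x (hx₀.le.trans hx)).hasDerivAt (hinterior x hx)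
  have hvx : ∀ x ≥ x₀, HasDerivAt v (q x * u x) x := fun x hx =>
    (hv' x (hx₀.le.trans hx)).hasDerivAt (hinterior x hx)
  have hq₀ : ∀ x ≥ x₀, 0 ≤ q x := fun x hx => by simp only [q]; nlinarith
  have hL2 : IntegrableOn (fun x => u x ^ 2) (Ici x₀) := hL2u.mono_set (Ici_subset_Ioi.2 hx₀)
  have hdecay := sq_le_sq_mul_exp_neg_integral_sqrt hux hvx
    (fun x _ => (((hasDerivAt_id x).sub_const k).pow 2).sub_const lam) hqc hq₀
    (fun x hx => by simp; linarith) hL2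
  have hmass : ∫ x in 0..x₀, u x ^ 2 ≤ 1 := by
    rw [intervalIntegral.integral_of_le hx₀.le, ← hnorm]
    exact setIntegral_mono_set hL2u (ae_of_all _ fun x => sq_nonneg (u x))
      Ioc_subset_Ioi_self.eventuallyLE
  have hux₀ := sq_le_two_sqrt_mul_integral_sq hx₀.le hlam
    (fun x hx => (hu x (hIcc hx)).mono hIcc) (fun x hx => (hv' x (hIcc hx)).mono hIcc)
    hqc.continuousOn (fun x _ => by simp only [q]; nlinarith [sq_nonneg (x - k)]) hu0
    (mul_le_zero_of_integrableOn_sq hux hvx hq₀ hL2 x₀ le_rfl)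
  intro x hx
  refine abs_le_of_sq_le_sq ?_ (by positivity)
  rw [sq_sqrt_two_mul_rpow_mul_exp hlam.le]
  exact (hdecay x hx).trans (by gcongr; nlinarith [sqrt_nonneg lam])

/-- super-exponential decay of a normalized Dirichlet eigenfunction of the
shifted harmonic oscillator in the classically forbidden region:
`|u(x)| ≤ 2^{1/2} λ^{1/4} exp(-∫_{x₀}^x ((t-k)²-λ)^{1/2} dt)` for x ≥ x₀. -/
theorem eigenfunction_agmon_decay (k lam : ℝ) (hk : k ≤ 0) (hlam : 0 < lam)
    (u v w : ℝ → ℝ)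
    (hu : ∀ x ∈ Set.Ici (0:ℝ), HasDerivWithinAt u (v x) (Set.Ici 0) x)
    (hv : ∀ x ∈ Set.Ici (0:ℝ), HasDerivWithinAt v (w x) (Set.Ici 0) x)
    (hw : ContinuousOn w (Set.Ici 0))
    (hu0 : u 0 = 0)
    (hode : ∀ x ≥ (0:ℝ), -w x + (x - k) ^ 2 * u x = lam * u x)
    (hL2u : MeasureTheory.IntegrableOn (fun x => (u x) ^ 2) (Set.Ioi 0))
    (hL2v : MeasureTheory.IntegrableOn (fun x => (v x) ^ 2) (Set.Ioi 0))
    (hnorm : ∫ x in Set.Ioi (0:ℝ), (u x) ^ 2 = 1)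
    (x₀ : ℝ) (hx₀ : 0 < x₀) (hx₀lam : lam ≤ (x₀ - k) ^ 2) :
    ∀ x ≥ x₀, |u x| ≤ Real.sqrt 2 * lam ^ ((1:ℝ)/4)
      * Real.exp (-∫ t in x₀..x, Real.sqrt ((t - k) ^ 2 - lam)) :=
  eigenfunction_agmon_decay_general k lam hk hlam u v w hu hv hu0 hode hL2u hnorm x₀ hx₀ hx₀lam
end

section
/- Let x₀ > 0 and β ∈ (0,1). Suppose λ : (−∞,0] → (0,∞) satisfies λ(k) ≤ (x₀ − k)² for all k ≤ 0, and suppose u : [0,∞) × (−∞,0] → ℝ is jointly measurable and such that for every k ≤ 0 the function u(·,k) is C² with u(0,k) = 0, satisfies −∂ₓ²u(x,k) + (x−k)² u(x,k) = λ(k) u(x,k) for all x ≥ 0, belongs to L²(0,∞) together with ∂ₓu(·,k), and is normalized by ∫₀^∞ u(x,k)² dx = 1. Then there exist constants c = c(β,x₀) > 0 and ℓ = ℓ(β,x₀) > 0, depending only on β and x₀, such that for every g ∈ L²(−∞,0) and every L ≥ ℓ one has ∫_L^∞ ∫_{−∞}^0 u(x,k)² |g(k)|² dk dx ≤ c ‖g‖²_{L²(−∞,0)}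 e^{−β L²}. -/
open MeasureTheory Filter Set


noncomputable def chiF (a x : ℝ) : ℝ := min 1 (max 0 (x - a))
noncomputable def chiD (a x : ℝ) : ℝ := Set.indicator (Set.Ico a (a+1)) (fun _ => 1) x
noncomputable def rhoF (β L x : ℝ) : ℝ := β/2 * (min x L)^2
noncomputable def minD (L x : ℝ) : ℝ := Set.indicator (Set.Iio L) (fun _ => 1) x
noncomputable def rhoD (β L x : ℝ) : ℝ := β * (min x L) * minD L x
noncomputable def phiF (β a L x : ℝ) : ℝ := chiF a x * Real.exp (rhoF β L x)
noncomputable def phiD (β a L x : ℝ) : ℝ :=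
  chiD a x * Real.exp (rhoF β L x) + chiF a x * (Real.exp (rhoF β L x) * rhoD β L x)

lemma chiF_cont (a : ℝ) : Continuous (chiF a) := by
  unfold chiF
  fun_prop

lemma minL_cont (L : ℝ) : Continuous (fun x : ℝ => min x L) := by fun_prop

lemma rhoF_cont (β L : ℝ) : Continuous (rhoF β L) := by unfold rhoF; fun_prop

lemma phiF_cont (β a L : ℝ) : Continuous (phiF β a L) := by
  unfold phiF; exact (chiF_cont a).mul ((rhoF_cont β L).rexp)

lemma hasDeriv_chiF (a x : ℝ) : HasDerivWithinAt (chiF a) (chiD a x) (Ici x) x := by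
  rcases lt_or_ge x a with h | h
  · have hev : chiF a =ᶠ[nhds x] fun _ => (0:ℝ) := by
      filter_upwards [Iio_mem_nhds h] with y hy
      have : y - a ≤ 0 := by simp at hy; linarith
      simp [chiF, max_eq_left this]
    have h0 : HasDerivAt (chiF a) 0 x :=
      (hasDerivAt_const x (0:ℝ)).congr_of_eventuallyEq hev
    have : chiD a x = 0 := by
      simp [chiD, Set.indicator_of_notMem, Set.mem_Ico, not_and_or, not_le.2 h]
    rw [this]; exact h0.hasDerivWithinAt
  rcases lt_or_ge x (a+1) with h2 | h2
  · have hmem : Ici x ∩ Iio (a+1) ∈ nhdsWithin x (Ici x) :=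
      Filter.inter_mem self_mem_nhdsWithin (mem_nhdsWithin_of_mem_nhds (Iio_mem_nhds h2))
    have hev : chiF a =ᶠ[nhdsWithin x (Ici x)] fun y => y - a := by
      filter_upwards [hmem] with y hy
      obtain ⟨hy1, hy2⟩ := hy
      have h1 : (0:ℝ) ≤ y - a := by simp at hy1 hy2 ⊢; linarith
      have h3 : y - a ≤ 1 := by simp at hy1 hy2 ⊢; linarith
      simp [chiF, max_eq_right h1, min_eq_right h3]
    have base : HasDerivWithinAt (fun y : ℝ => y - a) 1 (Ici x) x :=
      ((hasDerivAt_id x).sub_const a).hasDerivWithinAt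
    have hx : chiF a x = x - a := by
      have h1 : (0:ℝ) ≤ x - a := by linarith
      have h3 : x - a ≤ 1 := by linarith
      simp [chiF, max_eq_right h1, min_eq_right h3]
    have : chiD a x = 1 := by
      simp [chiD, Set.indicator_of_mem, Set.mem_Ico.2 ⟨h, h2⟩]
    rw [this]
    exact base.congr_of_eventuallyEq hev hx
  · have base : HasDerivWithinAt (fun _ : ℝ => (1:ℝ)) 0 (Ici x) x :=
      (hasDerivAt_const x (1:ℝ)).hasDerivWithinAt
    have heq : ∀ y ∈ Ici x, chiF a y = 1 := by
      intro y hy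
      have : (1:ℝ) ≤ y - a := by simp at hy; linarith
      simp [chiF, max_eq_right (by linarith : (0:ℝ) ≤ y - a), min_eq_left this]
    have : chiD a x = 0 := by
      simp [chiD, Set.indicator_of_notMem, Set.mem_Ico, not_and_or, not_lt.2 h2]
    rw [this]
    exact base.congr heq (heq x Set.self_mem_Ici)

lemma hasDeriv_minL (L x : ℝ) : HasDerivWithinAt (fun y => min y L) (minD L x) (Ici x) x := by
  rcases lt_or_ge x L with h | h
  · have hev : (fun y => min y L) =ᶠ[nhds x] fun y => y := by
      filter_upwards [Iio_mem_nhds h] with y hy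
      exact min_eq_left (le_of_lt hy)
    have h0 : HasDerivAt (fun y => min y L) 1 x := (hasDerivAt_id x).congr_of_eventuallyEq hev
    have : minD L x = 1 := by simp [minD, Set.indicator_of_mem, Set.mem_Iio.2 h]
    rw [this]; exact h0.hasDerivWithinAt
  · have base : HasDerivWithinAt (fun _ : ℝ => L) 0 (Ici x) x :=
      (hasDerivAt_const x L).hasDerivWithinAt
    have heq : ∀ y ∈ Ici x, min y L = L := fun y hy => min_eq_right (le_trans h hy)
    have : minD L x = 0 := by simp [minD, Set.indicator_of_notMem, not_lt.2 h]
    rw [this]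
    exact base.congr heq (heq x Set.self_mem_Ici)

lemma hasDeriv_rhoF (β L x : ℝ) : HasDerivWithinAt (rhoF β L) (rhoD β L x) (Ici x) x := by
  have h := ((hasDeriv_minL L x).pow 2).const_mul (β/2)
  have hval : β/2 * ((2:ℕ) * min x L ^ (2-1) * minD L x) = rhoD β L x := by
    simp [rhoD]; ring
  rw [← hval]; exact h

lemma hasDeriv_phiF (β a L x : ℝ) : HasDerivWithinAt (phiF β a L) (phiD β a L x) (Ici x) x :=
  (hasDeriv_chiF a x).mul (hasDeriv_rhoF β L x).exp

lemma chiF_eq_one {a x : ℝ} (h : a + 1 ≤ x) : chiF a x = 1 := by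
  simp [chiF, max_eq_right (by linarith : (0:ℝ) ≤ x - a), min_eq_left (by linarith : (1:ℝ) ≤ x - a)]

lemma chiD_eq_zero_of_ge {a x : ℝ} (h : a + 1 ≤ x) : chiD a x = 0 := by
  simp [chiD, Set.indicator_of_notMem, Set.mem_Ico, not_and_or, not_lt.2 h]

lemma chiF_eq_sub {a x : ℝ} (h1 : a ≤ x) (h2 : x ≤ a + 1) : chiF a x = x - a := by
  simp [chiF, max_eq_right (by linarith : (0:ℝ) ≤ x - a), min_eq_right (by linarith : x - a ≤ 1)]

lemma chiD_eq_one {a x : ℝ} (h1 : a ≤ x) (h2 : x < a + 1) : chiD a x = 1 := by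
  simp [chiD, Set.indicator_of_mem, Set.mem_Ico.2 ⟨h1, h2⟩]

lemma rhoF_eq_lt {β L x : ℝ} (h : x ≤ L) : rhoF β L x = β/2 * x^2 := by
  simp [rhoF, min_eq_left h]

lemma rhoD_eq_lt {β L x : ℝ} (h : x < L) : rhoD β L x = β * x := by
  simp [rhoD, minD, Set.indicator_of_mem, Set.mem_Iio.2 h, min_eq_left (le_of_lt h)]

lemma rhoF_eq_ge {β L x : ℝ} (h : L ≤ x) : rhoF β L x = β/2 * L^2 := by
  simp [rhoF, min_eq_right h]

lemma rhoD_eq_ge {β L x : ℝ} (h : L ≤ x) : rhoD β L x = 0 := by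
  simp [rhoD, minD, Set.indicator_of_notMem, not_lt.2 h]

lemma freq_small (f : ℝ → ℝ) (hf : IntegrableOn f (Ioi (0:ℝ))) {ε : ℝ} (hε : 0 < ε) :
    ∃ᶠ t in atTop, |f t| ≤ ε := by
  by_contra hcon
  rw [Filter.not_frequently] at hcon
  rw [eventually_atTop] at hcon
  obtain ⟨T, hT⟩ := hcon
  have habs : IntegrableOn (fun x => |f x|) (Ioi (0:ℝ)) := hf.abs
  have hm := habs.measure_ge_lt_top hε
  have hsub : Ioi (max T 0) ⊆ {x | ε ≤ |f x|} := by
    intro x hx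
    have hx' : T < x := lt_of_le_of_lt (le_max_left T 0) hx
    exact le_of_lt (not_le.1 (hT x (le_of_lt hx')))
  have h1 : (volume.restrict (Ioi (0:ℝ))) (Ioi (max T 0)) = ⊤ := by
    rw [Measure.restrict_apply measurableSet_Ioi]
    have : Ioi (max T 0) ∩ Ioi (0:ℝ) = Ioi (max T 0) := by
      apply inter_eq_left.2
      exact Ioi_subset_Ioi (le_max_right T 0)
    rw [this, Real.volume_Ioi]
  have h2 := measure_mono (μ := volume.restrict (Ioi (0:ℝ))) hsub
  rw [h1] at h2
  exact absurd (lt_of_le_of_lt h2 hm) (lt_irrefl _)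
noncomputable def BdF (β a L k lam : ℝ) (u v : ℝ → ℝ) (x : ℝ) : ℝ :=
  (v x^2 + ((x - k)^2 - lam) * u x^2) * (phiF β a L x)^2
    + 2 * phiF β a L x * phiD β a L x * (u x * v x)

lemma qlb {x₀ k lam x : ℝ} (hk : k ≤ 0) (hlam : lam ≤ (x₀ - k)^2) (hx : x₀ ≤ x) :
    x^2 - x₀^2 ≤ (x - k)^2 - lam := by
  nlinarith [mul_nonneg (neg_nonneg.2 hk) (sub_nonneg.2 hx)]

lemma q_nonneg {x₀ k lam x : ℝ} (hx₀ : 0 < x₀) (hk : k ≤ 0) (hlam : lam ≤ (x₀ - k)^2)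
    (hx : x₀ ≤ x) : 0 ≤ (x - k)^2 - lam := by
  have h := qlb hk hlam hx
  nlinarith

lemma region2 (x₀ β a L k lam : ℝ) (u v : ℝ → ℝ) (x : ℝ)
    (hx₀ : 0 < x₀) (hβ0 : 0 < β) (hβ1 : β < 1)
    (hax : x₀ ≤ a) (haq : x₀^2 ≤ (1 - β^2) * a^2) (hL1 : a + 2 ≤ L)
    (hk : k ≤ 0) (hlam : lam ≤ (x₀ - k)^2)
    (hx1 : a + 1 ≤ x) : 0 ≤ BdF β a L k lam u v x := by
  have ha0 : 0 < a := lt_of_lt_of_le hx₀ hax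
  have hβ2 : 0 < 1 - β^2 := by nlinarith
  have hxx : x₀ ≤ x := by linarith
  have hq0' := q_nonneg hx₀ hk hlam hxx
  have hchi := chiF_eq_one hx1
  have hchiD := chiD_eq_zero_of_ge hx1
  rcases lt_or_ge x L with hxL | hxL
  · have hrho := rhoF_eq_lt (β := β) (le_of_lt hxL)
    have hrhoD := rhoD_eq_lt (β := β) hxL
    have hphix : phiF β a L x = Real.exp (β/2 * x^2) := by simp [phiF, hchi, hrho]
    have hphiDx : phiD β a L x = β * x * Real.exp (β/2 * x^2) := by
      simp [phiD, hchiD, hchi, hrho, hrhoD]; ring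
    have hx2 : a^2 ≤ x^2 := by nlinarith
    have hqb : β^2 * x^2 ≤ (x - k)^2 - lam := by
      linarith [qlb hk hlam hxx, haq, mul_nonneg hβ2.le (sub_nonneg.2 hx2)]
    unfold BdF
    rw [hphix, hphiDx]
    set e := Real.exp (β/2 * x^2) with he
    have hsq' : 0 ≤ (e * v x + β * x * e * u x)^2 := sq_nonneg _
    have hint1 : 0 ≤ ((x - k)^2 - lam - β^2 * x^2) * u x^2 * e^2 :=
      mul_nonneg (mul_nonneg (sub_nonneg.2 hqb) (sq_nonneg _)) (sq_nonneg _)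
    nlinarith [hsq', hint1]
  · have hrho := rhoF_eq_ge (β := β) hxL
    have hrhoD := rhoD_eq_ge (β := β) hxL
    have hphiDx : phiD β a L x = 0 := by simp [phiD, hchiD, hchi, hrhoD]
    have hphix : phiF β a L x = Real.exp (β/2 * L^2) := by simp [phiF, hchi, hrho]
    unfold BdF
    rw [hphix, hphiDx]
    have hint1 : 0 ≤ ((x - k)^2 - lam) * u x^2 * (Real.exp (β/2 * L^2))^2 :=
      mul_nonneg (mul_nonneg hq0' (sq_nonneg _)) (sq_nonneg _)
    have hint2 : 0 ≤ v x^2 * (Real.exp (β/2 * L^2))^2 :=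
      mul_nonneg (sq_nonneg _) (sq_nonneg _)
    nlinarith [hint1, hint2]

lemma region1 (x₀ β a L k lam : ℝ) (u v : ℝ → ℝ) (x : ℝ)
    (hx₀ : 0 < x₀) (hβ0 : 0 < β) (hβ1 : β < 1)
    (hax : x₀ ≤ a) (haq : x₀^2 ≤ (1 - β^2) * a^2) (hL1 : a + 2 ≤ L)
    (hk : k ≤ 0) (hlam : lam ≤ (x₀ - k)^2)
    (hx1 : a ≤ x) (hx2 : x ≤ a + 1) :
    -((1 + β*(a+1))^2 * Real.exp (β*(a+1)^2)) * u x^2 ≤ BdF β a L k lam u v x := by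
  have ha0 : 0 < a := lt_of_lt_of_le hx₀ hax
  have hβ2 : 0 < 1 - β^2 := by nlinarith
  have hD'0 : 0 < (1 + β*(a+1))^2 * Real.exp (β*(a+1)^2) := by positivity
  rcases lt_or_ge x (a+1) with hxa | hxa
  swap
  · have h0 := region2 x₀ β a L k lam u v x hx₀ hβ0 hβ1 hax haq hL1 hk hlam hxa
    nlinarith [sq_nonneg (u x), hD'0, mul_nonneg hD'0.le (sq_nonneg (u x))]
  have hxx : x₀ ≤ x := le_trans hax hx1
  have hxL : x < L := by linarith
  have hchi := chiF_eq_sub hx1 hx2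
  have hchiD := chiD_eq_one hx1 hxa
  have hrho := rhoF_eq_lt (β := β) (le_of_lt hxL)
  have hrhoD := rhoD_eq_lt (β := β) hxL
  have hphix : phiF β a L x = (x - a) * Real.exp (β/2 * x^2) := by simp [phiF, hchi, hrho]
  have hphiDx : phiD β a L x = (1 + (x - a) * (β * x)) * Real.exp (β/2 * x^2) := by
    simp [phiD, hchiD, hchi, hrho, hrhoD]; ring
  have hq0' := q_nonneg hx₀ hk hlam hxx
  unfold BdF
  rw [hphix, hphiDx]
  set e := Real.exp (β/2 * x^2) with he
  have he2 : e^2 = Real.exp (β * x^2) := by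
    rw [he, sq, ← Real.exp_add]; congr 1; ring
  have hx0 : (0:ℝ) ≤ x := by linarith
  have hxsq : x^2 ≤ (a+1)^2 := pow_le_pow_left₀ hx0 (by linarith) 2
  have hee : Real.exp (β * x^2) ≤ Real.exp (β*(a+1)^2) := by
    apply Real.exp_le_exp.2
    exact mul_le_mul_of_nonneg_left hxsq hβ0.le
  have hbx : β * x ≤ β * (a+1) := mul_le_mul_of_nonneg_left (by linarith) hβ0.le
  have hs1 : (x - a) * (β * x) ≤ β * (a+1) := by
    calc (x - a) * (β * x) ≤ 1 * (β * (a+1)) :=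
          mul_le_mul (by linarith) hbx (mul_nonneg hβ0.le hx0) one_pos.le
      _ = β * (a+1) := one_mul _
  have hs0 : 0 ≤ (x - a) * (β * x) := mul_nonneg (by linarith) (mul_nonneg hβ0.le hx0)
  have hfac : (1 + (x - a) * (β * x))^2 ≤ (1 + β*(a+1))^2 :=
    pow_le_pow_left₀ (by linarith) (by linarith) 2
  have hP'b : ((1 + (x - a) * (β * x)) * e)^2 ≤ (1 + β*(a+1))^2 * Real.exp (β*(a+1)^2) := by
    have h1 : ((1 + (x - a) * (β * x)) * e)^2
        = (1 + (x - a) * (β * x))^2 * Real.exp (β * x^2) := by rw [← he2]; ring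
    rw [h1]
    calc (1 + (x - a) * (β * x))^2 * Real.exp (β * x^2)
        ≤ (1 + β*(a+1))^2 * Real.exp (β * x^2) :=
          mul_le_mul_of_nonneg_right hfac (Real.exp_pos _).le
      _ ≤ (1 + β*(a+1))^2 * Real.exp (β*(a+1)^2) :=
          mul_le_mul_of_nonneg_left hee (sq_nonneg _)
  have hsq' : 0 ≤ ((x - a) * e * v x + (1 + (x - a) * (β * x)) * e * u x)^2 := sq_nonneg _
  have hint1 : 0 ≤ ((x - k)^2 - lam) * u x^2 * ((x - a) * e)^2 :=
    mul_nonneg (mul_nonneg hq0' (sq_nonneg _)) (sq_nonneg _)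
  have hint2 : 0 ≤ ((1 + β*(a+1))^2 * Real.exp (β*(a+1)^2)
      - ((1 + (x - a) * (β * x)) * e)^2) * u x^2 :=
    mul_nonneg (sub_nonneg.2 hP'b) (sq_nonneg _)
  have expand : (v x^2 + ((x - k)^2 - lam) * u x^2) * ((x - a) * e)^2
      + 2 * ((x - a) * e) * ((1 + (x - a) * (β * x)) * e) * (u x * v x)
      + ((1 + β*(a+1))^2 * Real.exp (β*(a+1)^2)) * u x^2
      = ((x - a) * e * v x + (1 + (x - a) * (β * x)) * e * u x)^2
        + ((x - k)^2 - lam) * u x^2 * ((x - a) * e)^2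
        + ((1 + β*(a+1))^2 * Real.exp (β*(a+1)^2)
            - ((1 + (x - a) * (β * x)) * e)^2) * u x^2 := by ring
  linarith [hsq', hint1, hint2, expand.ge, expand.le]

lemma region3 (x₀ β a L k lam : ℝ) (u v : ℝ → ℝ) (x : ℝ)
    (hx₀ : 0 < x₀) (hβ0 : 0 < β) (hβ1 : β < 1)
    (hax : x₀ ≤ a) (haq : x₀^2 ≤ (1 - β^2) * a^2) (hL1 : a + 2 ≤ L) (hL2 : x₀^2 + 1 ≤ L^2)
    (hk : k ≤ 0) (hlam : lam ≤ (x₀ - k)^2)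
    (hxL : L ≤ x) : Real.exp (β * L^2) * u x^2 ≤ BdF β a L k lam u v x := by
  have ha0 : 0 < a := lt_of_lt_of_le hx₀ hax
  have hx1 : a + 1 ≤ x := by linarith
  have hxx : x₀ ≤ x := by linarith
  have hL0 : 0 < L := by linarith
  have hchi := chiF_eq_one hx1
  have hchiD := chiD_eq_zero_of_ge hx1
  have hrho := rhoF_eq_ge (β := β) hxL
  have hrhoD := rhoD_eq_ge (β := β) hxL
  have hphiDx : phiD β a L x = 0 := by simp [phiD, hchiD, hchi, hrhoD]
  have hphix : phiF β a L x = Real.exp (β/2 * L^2) := by simp [phiF, hchi, hrho]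
  have he2 : (Real.exp (β/2 * L^2))^2 = Real.exp (β * L^2) := by
    rw [sq, ← Real.exp_add]; congr 1; ring
  have hqge : 1 ≤ (x - k)^2 - lam := by
    have := qlb hk hlam hxx
    nlinarith
  unfold BdF
  rw [hphix, hphiDx, he2]
  have hE := Real.exp_pos (β * L^2)
  have hint1 : 0 ≤ ((x - k)^2 - lam - 1) * u x^2 * Real.exp (β * L^2) :=
    mul_nonneg (mul_nonneg (sub_nonneg.2 hqge) (sq_nonneg _)) hE.le
  have hint2 : 0 ≤ v x^2 * Real.exp (β * L^2) := mul_nonneg (sq_nonneg _) hE.le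
  nlinarith [hint1, hint2]

lemma hasDeriv_B (β a L k lam : ℝ) (u v : ℝ → ℝ)
    (hu : ∀ x ∈ Ici (0:ℝ), HasDerivWithinAt u (v x) (Ici 0) x)
    (hv : ∀ x ∈ Ici (0:ℝ), HasDerivWithinAt v (((x - k)^2 - lam) * u x) (Ici 0) x)
    (x : ℝ) (hx : 0 < x) :
    HasDerivWithinAt (fun y => u y * v y * (phiF β a L y)^2)
      (BdF β a L k lam u v x) (Ioi x) x := by
  have hx0 : x ∈ Ici (0:ℝ) := le_of_lt hx
  have hu' : HasDerivAt u (v x) x := (hu x hx0).hasDerivAt (Ici_mem_nhds hx)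
  have hv' : HasDerivAt v (((x - k)^2 - lam) * u x) x := (hv x hx0).hasDerivAt (Ici_mem_nhds hx)
  have hphi : HasDerivWithinAt (phiF β a L) (phiD β a L x) (Ioi x) x :=
    (hasDeriv_phiF β a L x).mono Ioi_subset_Ici_self
  have h := (hu'.hasDerivWithinAt.mul hv'.hasDerivWithinAt).mul (hphi.pow 2)
  have hval : BdF β a L k lam u v x
      = (v x * v x + u x * (((x - k)^2 - lam) * u x)) * phiF β a L x ^ 2
        + u x * v x * ((2:ℕ) * phiF β a L x ^ (2-1) * phiD β a L x) := by
    unfold BdF; push_cast; ring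
  rw [hval]
  exact h

lemma BdF_intervalIntegrable (β a L k lam : ℝ) (u v : ℝ → ℝ)
    (hucont : ContinuousOn u (Ici 0)) (hvcont : ContinuousOn v (Ici 0))
    (s t : ℝ) (hs : 0 < s) (hst : s ≤ t) :
    IntervalIntegrable (BdF β a L k lam u v) volume s t := by
  rw [intervalIntegrable_iff_integrableOn_Ioc_of_le hst]
  have hsub' : Icc s t ⊆ Ici (0:ℝ) := fun x hx => le_trans (le_of_lt hs) hx.1
  set F₀ : ℝ → ℝ := fun x => (v x^2 + ((x - k)^2 - lam) * u x^2) * (phiF β a L x)^2 with hF₀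
  set F₁ : ℝ → ℝ := fun x =>
    2 * phiF β a L x * Real.exp (rhoF β L x) * (u x * v x) with hF₁
  set F₂ : ℝ → ℝ := fun x =>
    2 * phiF β a L x * (chiF a x * (Real.exp (rhoF β L x) * (β * min x L))) * (u x * v x)
    with hF₂
  have hdecomp : EqOn (BdF β a L k lam u v) (fun x => F₀ x + (Ico a (a+1)).indicator F₁ x
      + (Iio L).indicator F₂ x) (Ioc s t) := by
    intro x _
    simp only [BdF, hF₀, hF₁, hF₂, phiD, chiD, rhoD, minD]
    by_cases h1 : x ∈ Ico a (a+1) <;> by_cases h2 : x ∈ Iio L <;>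
      simp [h1, h2, Set.indicator_of_mem, Set.indicator_of_notMem] <;> ring
  have hc0 : ContinuousOn F₀ (Icc s t) := by
    apply ContinuousOn.mul
    · apply ContinuousOn.add
      · exact (hvcont.mono hsub').pow 2
      · exact (by fun_prop : Continuous fun x : ℝ => (x - k)^2 - lam).continuousOn.mul
          ((hucont.mono hsub').pow 2)
    · exact ((phiF_cont β a L).pow 2).continuousOn
  have hc1 : ContinuousOn F₁ (Icc s t) := by
    apply ContinuousOn.mul
    · exact ((continuous_const.mul (phiF_cont β a L)).mul ((rhoF_cont β L).rexp)).continuousOn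
    · exact (hucont.mono hsub').mul (hvcont.mono hsub')
  have hc2 : ContinuousOn F₂ (Icc s t) := by
    apply ContinuousOn.mul
    · apply ContinuousOn.mul
      · exact (continuous_const.mul (phiF_cont β a L)).continuousOn
      · exact ((chiF_cont a).mul (((rhoF_cont β L).rexp).mul
          (continuous_const.mul (minL_cont L)))).continuousOn
    · exact (hucont.mono hsub').mul (hvcont.mono hsub')
  have hi0 : IntegrableOn F₀ (Ioc s t) := (hc0.integrableOn_Icc).mono_set Ioc_subset_Icc_self
  have hi1 : IntegrableOn F₁ (Ioc s t) := (hc1.integrableOn_Icc).mono_set Ioc_subset_Icc_self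
  have hi2 : IntegrableOn F₂ (Ioc s t) := (hc2.integrableOn_Icc).mono_set Ioc_subset_Icc_self
  have hsum : IntegrableOn (fun x => F₀ x + (Ico a (a+1)).indicator F₁ x
      + (Iio L).indicator F₂ x) (Ioc s t) :=
    (hi0.add (hi1.indicator measurableSet_Ico)).add (hi2.indicator measurableSet_Iio)
  exact hsum.congr_fun (fun x hx => (hdecomp hx).symm) measurableSet_Ioc

lemma tail_small (x₀ β a D L k lam : ℝ) (u v : ℝ → ℝ)
    (hx₀ : 0 < x₀) (hβ0 : 0 < β) (hβ1 : β < 1)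
    (hax : x₀ ≤ a) (haq : x₀^2 ≤ (1 - β^2) * a^2)
    (hD : (1 + β*(a+1))^2 * Real.exp (β*(a+1)^2) ≤ D)
    (hL1 : a + 2 ≤ L) (hL2 : x₀^2 + 1 ≤ L^2)
    (hk : k ≤ 0) (hlam : lam ≤ (x₀ - k)^2)
    (hu : ∀ x ∈ Ici (0:ℝ), HasDerivWithinAt u (v x) (Ici 0) x)
    (hv : ∀ x ∈ Ici (0:ℝ), HasDerivWithinAt v (((x - k)^2 - lam) * u x) (Ici 0) x)
    (hu2 : IntegrableOn (fun x => u x ^2) (Ioi 0))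
    (hv2 : IntegrableOn (fun x => v x ^2) (Ioi 0))
    (hnorm : ∫ x in Ioi 0, u x ^2 = 1) :
    ∫ x in Ioi L, u x ^2 ≤ D * Real.exp (-β * L^2) := by
  have ha0 : 0 < a := lt_of_lt_of_le hx₀ hax
  have hL0 : 0 < L := by linarith
  set D' : ℝ := (1 + β*(a+1))^2 * Real.exp (β*(a+1)^2) with hD'def
  have hD'0 : 0 < D' := by positivity
  have hucont : ContinuousOn u (Ici 0) := fun x hx => (hu x hx).continuousWithinAt
  have hvcont : ContinuousOn v (Ici 0) := fun x hx => (hv x hx).continuousWithinAt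
  set B : ℝ → ℝ := fun x => u x * v x * (phiF β a L x)^2 with hBdef
  have hBcont : ContinuousOn B (Ici 0) :=
    (hucont.mul hvcont).mul (((phiF_cont β a L).pow 2).continuousOn)
  have hkey : ∀ t, L ≤ t → ∫ x in L..t, u x^2 ≤ |u t * v t| + D * Real.exp (-β * L^2) := by
    intro t ht
    have h0a1 : (0:ℝ) < a + 1 := by linarith
    have ftc : ∀ s r : ℝ, 0 < s → s ≤ r → ∫ x in s..r, BdF β a L k lam u v x = B r - B s := by
      intro s r hs hsr
      apply intervalIntegral.integral_eq_sub_of_hasDeriv_right_of_le hsr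
      · exact hBcont.mono (fun x hx => le_trans (le_of_lt hs) hx.1)
      · intro x hx
        exact hasDeriv_B β a L k lam u v hu hv x (lt_trans hs hx.1)
      · exact BdF_intervalIntegrable β a L k lam u v hucont hvcont s r hs hsr
    have hu2int : ∀ s r : ℝ, 0 < s → s ≤ r → IntervalIntegrable (fun x => u x^2) volume s r := by
      intro s r hs hsr
      apply ContinuousOn.intervalIntegrable
      apply (hucont.mono ?_).pow 2
      rw [uIcc_of_le hsr]
      intro x hx
      exact le_trans (le_of_lt hs) hx.1
    have e1 : -D' * ∫ x in a..(a+1), u x^2 ≤ B (a+1) - B a := by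
      rw [← ftc a (a+1) ha0 (by linarith), ← intervalIntegral.integral_const_mul]
      apply intervalIntegral.integral_mono_on (by linarith)
        ((hu2int a (a+1) ha0 (by linarith)).const_mul _)
        (BdF_intervalIntegrable β a L k lam u v hucont hvcont a (a+1) ha0 (by linarith))
      intro x hx
      have hr := region1 x₀ β a L k lam u v x hx₀ hβ0 hβ1 hax haq hL1 hk hlam hx.1 hx.2
      rw [hD'def]
      linarith [hr]
    have e2 : (0:ℝ) ≤ B L - B (a+1) := by
      rw [← ftc (a+1) L h0a1 (by linarith)]
      apply intervalIntegral.integral_nonneg (by linarith)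
      intro x hx
      exact region2 x₀ β a L k lam u v x hx₀ hβ0 hβ1 hax haq hL1 hk hlam hx.1
    have e3 : Real.exp (β * L^2) * ∫ x in L..t, u x^2 ≤ B t - B L := by
      rw [← ftc L t hL0 ht, ← intervalIntegral.integral_const_mul]
      apply intervalIntegral.integral_mono_on ht ((hu2int L t hL0 ht).const_mul _)
        (BdF_intervalIntegrable β a L k lam u v hucont hvcont L t hL0 ht)
      intro x hx
      exact region3 x₀ β a L k lam u v x hx₀ hβ0 hβ1 hax haq hL1 hL2 hk hlam hx.1
    have hBa : B a = 0 := by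
      have h0 : chiF a a = 0 := by simp [chiF]
      simp [hBdef, phiF, h0]
    have hBt : B t ≤ |u t * v t| * Real.exp (β * L^2) := by
      have hchi := chiF_eq_one (by linarith : a + 1 ≤ t)
      have hrho := rhoF_eq_ge (β := β) ht
      have hphit : phiF β a L t = Real.exp (β/2 * L^2) := by simp [phiF, hchi, hrho]
      have he2 : (Real.exp (β/2 * L^2))^2 = Real.exp (β * L^2) := by
        rw [sq, ← Real.exp_add]; congr 1; ring
      simp only [hBdef, hphit, he2]
      have h1 := le_abs_self (u t * v t)
      have hE := Real.exp_pos (β * L^2)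
      calc u t * v t * Real.exp (β * L^2) ≤ |u t * v t| * Real.exp (β * L^2) :=
        mul_le_mul_of_nonneg_right h1 hE.le
      _ = _ := rfl
    have hS1 : ∫ x in a..(a+1), u x^2 ≤ 1 := by
      rw [intervalIntegral.integral_of_le (by linarith : a ≤ a+1), ← hnorm]
      apply setIntegral_mono_set hu2
      · exact ae_of_all _ (fun x => sq_nonneg (u x))
      · exact HasSubset.Subset.eventuallyLE (fun x hx => lt_of_lt_of_le ha0 (le_of_lt hx.1))
    have hS0 : 0 ≤ ∫ x in a..(a+1), u x^2 :=
      intervalIntegral.integral_nonneg (by linarith) (fun x _ => sq_nonneg (u x))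
    have hprod : D' * ∫ x in a..(a+1), u x^2 ≤ D' := by nlinarith [hS1, hS0, hD'0]
    have hmain : Real.exp (β * L^2) * ∫ x in L..t, u x^2
        ≤ |u t * v t| * Real.exp (β * L^2) + D' := by
      linarith [e1, e2, e3, hBa, hBt, hprod]
    have hEinv := Real.exp_pos (-β * L^2)
    have h4 : (∫ x in L..t, u x^2) * Real.exp (β * L^2)
        ≤ |u t * v t| * Real.exp (β * L^2) + D' := by linarith [hmain]
    have h7 : Real.exp (β * L^2) * Real.exp (-β * L^2) = 1 := by
      rw [← Real.exp_add]; norm_num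
    have h5 : (∫ x in L..t, u x^2) ≤ |u t * v t| + D' * Real.exp (-β * L^2) := by
      have h6 := mul_le_mul_of_nonneg_right h4 hEinv.le
      calc (∫ x in L..t, u x^2)
          = (∫ x in L..t, u x^2) * (Real.exp (β * L^2) * Real.exp (-β * L^2)) := by
            rw [h7]; ring
        _ = (∫ x in L..t, u x^2) * Real.exp (β * L^2) * Real.exp (-β * L^2) := by ring
        _ ≤ (|u t * v t| * Real.exp (β * L^2) + D') * Real.exp (-β * L^2) := h6
        _ = |u t * v t| * (Real.exp (β * L^2) * Real.exp (-β * L^2))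
            + D' * Real.exp (-β * L^2) := by ring
        _ = |u t * v t| + D' * Real.exp (-β * L^2) := by rw [h7]; ring
    have h8 : D' * Real.exp (-β * L^2) ≤ D * Real.exp (-β * L^2) :=
      mul_le_mul_of_nonneg_right hD hEinv.le
    linarith [h5, h8]
  have huvint : IntegrableOn (fun x => u x * v x) (Ioi 0) := by
    apply Integrable.mono' ((hu2.add hv2).const_mul (1/2 : ℝ))
    · exact ((hucont.mono Ioi_subset_Ici_self).mul
        (hvcont.mono Ioi_subset_Ici_self)).aestronglyMeasurable measurableSet_Ioi
    · apply ae_of_all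
      intro x
      simp only [Real.norm_eq_abs]
      rw [abs_mul]
      simp only [Pi.add_apply]
      nlinarith [sq_nonneg (|u x| - |v x|), sq_abs (u x), sq_abs (v x),
        abs_nonneg (u x), abs_nonneg (v x)]
  have hIL : IntegrableOn (fun x => u x^2) (Ioi L) := hu2.mono_set (Ioi_subset_Ioi (le_of_lt hL0))
  have hlim := MeasureTheory.intervalIntegral_tendsto_integral_Ioi L hIL tendsto_id
  refine le_of_forall_pos_le_add ?_
  intro ε hε
  have hev : ∀ᶠ t in atTop, (∫ x in Ioi L, u x^2) - ε/2 ≤ ∫ x in L..t, u x^2 :=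
    hlim.eventually (eventually_ge_nhds (by linarith))
  have hfr := freq_small (fun x => u x * v x) huvint (show (0:ℝ) < ε/2 by linarith)
  obtain ⟨t, h1, h2, h3⟩ := (hfr.and_eventually (hev.and (eventually_ge_atTop L))).exists
  have hk' := hkey t h3
  linarith

/-- uniform super-exponential smallness at large distance from the boundary,
for the negative-frequency part: for normalized fiber eigenfunctions u(·,k), k ≤ 0, with
eigenvalues λ(k) ≤ (x₀-k)², one has
`∫_L^∞ ∫_{-∞}^0 u(x,k)² |g(k)|² dk dx ≤ c ‖g‖²_{L²(-∞,0)} e^{-βL²}` for L large,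
with constants depending only on β and x₀. -/
theorem negative_frequencies_decay (x₀ β : ℝ) (hx₀ : 0 < x₀) (hβ : β ∈ Set.Ioo (0:ℝ) 1) :
    ∃ c > 0, ∃ ℓ > 0,
      ∀ (lam : ℝ → ℝ) (u v w : ℝ → ℝ → ℝ),
        Measurable (fun p : ℝ × ℝ => u p.1 p.2) →
        (∀ k ≤ (0:ℝ), 0 < lam k ∧ lam k ≤ (x₀ - k) ^ 2) →
        (∀ k ≤ (0:ℝ), ∀ x ∈ Set.Ici (0:ℝ),
          HasDerivWithinAt (fun x => u x k) (v x k) (Set.Ici 0) x) →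
        (∀ k ≤ (0:ℝ), ∀ x ∈ Set.Ici (0:ℝ),
          HasDerivWithinAt (fun x => v x k) (w x k) (Set.Ici 0) x) →
        (∀ k ≤ (0:ℝ), ContinuousOn (fun x => w x k) (Set.Ici 0)) →
        (∀ k ≤ (0:ℝ), u 0 k = 0) →
        (∀ k ≤ (0:ℝ), ∀ x ≥ (0:ℝ), -w x k + (x - k) ^ 2 * u x k = lam k * u x k) →
        (∀ k ≤ (0:ℝ), MeasureTheory.IntegrableOn (fun x => (u x k) ^ 2) (Set.Ioi 0)) →
        (∀ k ≤ (0:ℝ), MeasureTheory.IntegrableOn (fun x => (v x k) ^ 2) (Set.Ioi 0)) →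
        (∀ k ≤ (0:ℝ), ∫ x in Set.Ioi (0:ℝ), (u x k) ^ 2 = 1) →
        ∀ g : ℝ → ℂ,
          MeasureTheory.IntegrableOn (fun k => ‖g k‖ ^ 2) (Set.Iio 0) →
          ∀ L ≥ ℓ,
            (∫ x in Set.Ioi L, ∫ k in Set.Iio (0:ℝ), (u x k) ^ 2 * ‖g k‖ ^ 2)
              ≤ c * (∫ k in Set.Iio (0:ℝ), ‖g k‖ ^ 2) * Real.exp (-β * L ^ 2) := by
  
  obtain ⟨hβ0, hβ1⟩ := hβ
  have hβ2 : 0 < 1 - β^2 := by nlinarith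
  set a := x₀ / Real.sqrt (1 - β^2) with hadef
  have hs0 : 0 < Real.sqrt (1 - β^2) := Real.sqrt_pos.2 hβ2
  have ha0 : 0 < a := div_pos hx₀ hs0
  have hs1 : Real.sqrt (1 - β^2) ≤ 1 := Real.sqrt_le_one.2 (by nlinarith)
  have hax : x₀ ≤ a := by
    rw [hadef, le_div_iff₀ hs0]
    calc x₀ * Real.sqrt (1 - β^2) ≤ x₀ * 1 := mul_le_mul_of_nonneg_left hs1 hx₀.le
      _ = x₀ := mul_one _
  have haq : x₀^2 ≤ (1 - β^2) * a^2 := by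
    rw [hadef, div_pow, Real.sq_sqrt hβ2.le]
    rw [mul_div_cancel₀ _ (ne_of_gt hβ2)]
  refine ⟨(1 + β*(a+1))^2 * Real.exp (β*(a+1)^2), by positivity,
    max (a+2) (Real.sqrt (x₀^2+1)), lt_of_lt_of_le (by linarith) (le_max_left _ _), ?_⟩
  set D := (1 + β*(a+1))^2 * Real.exp (β*(a+1)^2) with hDdef
  have hD0 : 0 < D := by positivity
  intro lam u v w humeas hlam hu hv hwcont hu0 heq hu2 hv2 hnorm g hg L hL
  have hL1 : a + 2 ≤ L := le_trans (le_max_left _ _) hL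
  have hL2 : x₀^2 + 1 ≤ L^2 := by
    have h1 : Real.sqrt (x₀^2+1) ≤ L := le_trans (le_max_right _ _) hL
    have h2 : 0 ≤ Real.sqrt (x₀^2+1) := Real.sqrt_nonneg _
    calc x₀^2 + 1 = (Real.sqrt (x₀^2+1))^2 := (Real.sq_sqrt (by positivity)).symm
      _ ≤ L^2 := pow_le_pow_left₀ h2 h1 2
  have hL0 : 0 < L := by linarith
  -- uniform tail bound for each fiber
  have htail : ∀ k ≤ (0:ℝ), ∫ x in Ioi L, (u x k)^2 ≤ D * Real.exp (-β * L^2) := by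
    intro k hk
    apply tail_small x₀ β a D L k (lam k) (fun x => u x k) (fun x => v x k) hx₀ hβ0 hβ1
      hax haq le_rfl hL1 hL2 hk (hlam k hk).2 (hu k hk) ?_ (hu2 k hk) (hv2 k hk) (hnorm k hk)
    intro x hx
    have hw := hv k hk x hx
    have he := heq k hk x hx
    have hwe : w x k = ((x - k)^2 - lam k) * u x k := by linarith [he]
    rw [← hwe]
    exact hw
  -- measurable nonnegative version of ‖g‖²
  obtain ⟨G₀, hG₀sm, hG₀ae⟩ := hg.1
  set G : ℝ → ℝ := fun k => max (G₀ k) 0 with hGdef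
  have hGmeas : Measurable G := hG₀sm.measurable.max measurable_const
  have hGae : (fun k => ‖g k‖^2) =ᵐ[volume.restrict (Iio (0:ℝ))] G := by
    filter_upwards [hG₀ae] with k hk2
    have h0 : (0:ℝ) ≤ ‖g k‖^2 := by positivity
    rw [hGdef]
    simp only
    rw [← hk2, max_eq_left h0]
  have hGnn : ∀ k, 0 ≤ G k := fun k => le_max_right _ _
  have hGint : IntegrableOn G (Iio (0:ℝ)) := hg.congr hGae
  set E := D * Real.exp (-β * L^2) with hEdef
  have hE0 : 0 < E := by positivity
  -- measurability helpers
  have humeas2 : Measurable (fun p : ℝ × ℝ => ENNReal.ofReal ((u p.1 p.2)^2 * G p.2)) :=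
    ((humeas.pow_const 2).mul (hGmeas.comp measurable_snd)).ennreal_ofReal
  have hinner_meas : Measurable (fun x => ∫⁻ k in Iio (0:ℝ),
      ENNReal.ofReal ((u x k)^2 * G k)) := by
    exact Measurable.lintegral_prod_right humeas2
  -- the iterated lintegral, swapped
  have hswap : (∫⁻ x in Ioi L, ∫⁻ k in Iio (0:ℝ), ENNReal.ofReal ((u x k)^2 * G k))
      = ∫⁻ k in Iio (0:ℝ), ∫⁻ x in Ioi L, ENNReal.ofReal ((u x k)^2 * G k) :=
    lintegral_lintegral_swap humeas2.aemeasurable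
  -- bound the swapped integral
  have hperk : ∀ k, k ≤ 0 → (∫⁻ x in Ioi L, ENNReal.ofReal ((u x k)^2 * G k))
      ≤ ENNReal.ofReal E * ENNReal.ofReal (G k) := by
    intro k hk
    have hmk : Measurable (fun x => u x k) := humeas.comp (measurable_id.prodMk measurable_const)
    have h1 : ∀ x : ℝ, ENNReal.ofReal ((u x k)^2 * G k)
        = ENNReal.ofReal ((u x k)^2) * ENNReal.ofReal (G k) := fun x =>
      ENNReal.ofReal_mul (sq_nonneg _)
    simp_rw [h1]
    rw [lintegral_mul_const _ ((hmk.pow_const 2).ennreal_ofReal)]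
    apply mul_le_mul_left
    have hint : IntegrableOn (fun x => (u x k)^2) (Ioi L) :=
      (hu2 k hk).mono_set (Ioi_subset_Ioi hL0.le)
    rw [← ofReal_integral_eq_lintegral_ofReal hint (ae_of_all _ (fun x => sq_nonneg _))]
    exact ENNReal.ofReal_le_ofReal (htail k hk)
  have hbound : (∫⁻ k in Iio (0:ℝ), ∫⁻ x in Ioi L, ENNReal.ofReal ((u x k)^2 * G k))
      ≤ ENNReal.ofReal E * ENNReal.ofReal (∫ k in Iio (0:ℝ), G k) := by
    calc (∫⁻ k in Iio (0:ℝ), ∫⁻ x in Ioi L, ENNReal.ofReal ((u x k)^2 * G k))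
        ≤ ∫⁻ k in Iio (0:ℝ), ENNReal.ofReal E * ENNReal.ofReal (G k) :=
          setLIntegral_mono' measurableSet_Iio (fun k hk => hperk k (le_of_lt hk))
      _ = ENNReal.ofReal E * ∫⁻ k in Iio (0:ℝ), ENNReal.ofReal (G k) :=
          lintegral_const_mul _ hGmeas.ennreal_ofReal
      _ = ENNReal.ofReal E * ENNReal.ofReal (∫ k in Iio (0:ℝ), G k) := by
          rw [← ofReal_integral_eq_lintegral_ofReal hGint (ae_of_all _ hGnn)]
  have hJfin : (∫⁻ x in Ioi L, ∫⁻ k in Iio (0:ℝ), ENNReal.ofReal ((u x k)^2 * G k)) ≠ ⊤ := by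
    rw [hswap]
    exact ne_top_of_le_ne_top (by finiteness) hbound
  -- rewrite the target using G
  have hstep1 : (∫ x in Ioi L, ∫ k in Iio (0:ℝ), (u x k)^2 * ‖g k‖^2)
      = ∫ x in Ioi L, ∫ k in Iio (0:ℝ), (u x k)^2 * G k := by
    apply integral_congr_ae
    apply ae_of_all
    intro x
    apply integral_congr_ae
    filter_upwards [hGae] with k hk2
    rw [hk2]
  have hstep2 : ∀ x : ℝ, (∫ k in Iio (0:ℝ), (u x k)^2 * G k)
      = (∫⁻ k in Iio (0:ℝ), ENNReal.ofReal ((u x k)^2 * G k)).toReal := by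
    intro x
    apply integral_eq_lintegral_of_nonneg_ae
    · exact ae_of_all _ (fun k => mul_nonneg (sq_nonneg _) (hGnn k))
    · have : Measurable (fun k => (u x k)^2 * G k) :=
        ((humeas.comp (measurable_const.prodMk measurable_id)).pow_const 2).mul hGmeas
      exact this.aestronglyMeasurable
  have hstep3 : (∫ x in Ioi L, ((∫⁻ k in Iio (0:ℝ),
        ENNReal.ofReal ((u x k)^2 * G k)).toReal))
      = (∫⁻ x in Ioi L, ∫⁻ k in Iio (0:ℝ), ENNReal.ofReal ((u x k)^2 * G k)).toReal := by
    rw [integral_eq_lintegral_of_nonneg_ae (ae_of_all _ (fun x => ENNReal.toReal_nonneg))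
      hinner_meas.ennreal_toReal.aestronglyMeasurable]
    congr 1
    apply lintegral_congr_ae
    filter_upwards [ae_lt_top hinner_meas hJfin] with x hx
    exact ENNReal.ofReal_toReal hx.ne
  have hfinal : (∫ x in Ioi L, ∫ k in Iio (0:ℝ), (u x k)^2 * ‖g k‖^2)
      ≤ E * ∫ k in Iio (0:ℝ), G k := by
    rw [hstep1]
    simp_rw [hstep2]
    rw [hstep3]
    calc (∫⁻ x in Ioi L, ∫⁻ k in Iio (0:ℝ), ENNReal.ofReal ((u x k)^2 * G k)).toReal
        ≤ (ENNReal.ofReal E * ENNReal.ofReal (∫ k in Iio (0:ℝ), G k)).toReal := by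
          apply ENNReal.toReal_mono (by finiteness)
          rw [hswap]; exact hbound
      _ = E * ∫ k in Iio (0:ℝ), G k := by
          rw [← ENNReal.ofReal_mul hE0.le, ENNReal.toReal_ofReal]
          have : 0 ≤ ∫ k in Iio (0:ℝ), G k := integral_nonneg hGnn
          positivity
  have hGg : (∫ k in Iio (0:ℝ), G k) = ∫ k in Iio (0:ℝ), ‖g k‖^2 :=
    integral_congr_ae hGae.symm
  rw [hGg] at hfinal
  calc (∫ x in Ioi L, ∫ k in Iio (0:ℝ), (u x k)^2 * ‖g k‖^2)
      ≤ E * ∫ k in Iio (0:ℝ), ‖g k‖^2 := hfinal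
    _ = D * (∫ k in Iio (0:ℝ), ‖g k‖^2) * Real.exp (-β * L^2) := by rw [hEdef]; ring
end

section
/- Let β ∈ (0,1) and Λ > 0. Then there exists a constant C = C(β,Λ) > 0 such that for every k ≥ 0, every λ ∈ (0,Λ], and every C² function u : [0,∞) → ℝ with u(0) = 0 satisfying −u''(x) + (x−k)² u(x) = λ u(x) for all x ≥ 0, with u, u' ∈ L²(0,∞) and ∫₀^∞ u(x)² dx = 1, one has |u(x)| ≤ C e^{−β (x−k)²/2} for all x ≥ 0. -/
/-!
Multiplying the equation by `u` and integrating by parts gives `∫ u'² ≤ λ ∫ u² = λ`, so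
`u(x)² = 2 ∫₀ˣ u u' ≤ ∫ u² + ∫ u'² ≤ 1 + Λ`, and `u → 0` at infinity since `u²` and `(u²)'` are
integrable. With `s = Λ / (1 - β²)`, the Gaussian `G = C e^{-β(x-k)²/2}` satisfies
`G'' = (β²(x-k)² - β) G ≤ ((x-k)² - λ) G` wherever `(x-k)² ≥ s`, so it is a supersolution of the
equation solved by `±u` outside the well `|x - k| ≤ √s`. Choosing `C = √(1+Λ) e^{βs/2}` makes
`G ≥ √(1+Λ) ≥ ±u` on the well, and the minimum principle for `G ∓ u` on `[0, k - √s]` and on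
`[k + √s, ∞)` (where `u → 0` and `G > 0`) gives `±u ≤ G` everywhere.
-/

open MeasureTheory Filter Set Topology

theorem nonneg_on_Icc_of_deriv2_neg {a b : ℝ} {h h' h'' : ℝ → ℝ}
    (hc : ContinuousOn h (Icc a b)) (hd : ∀ x ∈ Ioo a b, HasDerivAt h (h' x) x)
    (hd' : ∀ x ∈ Ioo a b, HasDerivAt h' (h'' x) x)
    (hneg : ∀ x ∈ Ioo a b, h x < 0 → h'' x < 0) (ha : 0 ≤ h a) (hb : 0 ≤ h b) :
    ∀ x ∈ Icc a b, 0 ≤ h x := by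
  -- at a negative interior minimum `m`, `h' m = 0` and `h'' < 0` near `m`, so `h' < 0` and hence
  -- `h` strictly decreases just to the right of `m`
  intro x hx
  by_contra! hx0
  obtain ⟨m, hm, hmin⟩ := isCompact_Icc.exists_isMinOn ⟨x, hx⟩ hc
  have hm0 : h m < 0 := (hmin hx).trans_lt hx0
  have hmI : m ∈ Ioo a b :=
    ⟨hm.1.lt_of_ne (by rintro rfl; linarith), hm.2.lt_of_ne (by rintro rfl; linarith)⟩
  have hm' : h' m = 0 :=
    (hmin.isLocalMin (Icc_mem_nhds hmI.1 hmI.2)).hasDerivAt_eq_zero (hd m hmI)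
  have hnear : ∀ᶠ y in 𝓝[≥] m, y ∈ Ioo a b ∧ h y < 0 := nhdsWithin_le_nhds <|
    (isOpen_Ioo.eventually_mem hmI).and ((hd m hmI).continuousAt.eventually (gt_mem_nhds hm0))
  obtain ⟨c, hmc, hsub⟩ := mem_nhdsGE_iff_exists_Icc_subset.1 hnear
  have hsubI : ∀ y ∈ Ioo m c, y ∈ Ioo a b ∧ h y < 0 := fun y hy =>
    hsub (Ioo_subset_Icc_self hy)
  have h'_anti : StrictAntiOn h' (Icc m c) :=
    strictAntiOn_of_hasDerivWithinAt_neg (convex_Icc m c)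
      (fun y hy => (hd' y (hsub hy).1).continuousAt.continuousWithinAt)
      (fun y hy => by rw [interior_Icc] at hy ⊢; exact (hd' y (hsubI y hy).1).hasDerivWithinAt)
      (fun y hy => by rw [interior_Icc] at hy; exact hneg y (hsubI y hy).1 (hsubI y hy).2)
  have h_anti : StrictAntiOn h (Icc m c) :=
    strictAntiOn_of_hasDerivWithinAt_neg (convex_Icc m c)
      (fun y hy => (hd y (hsub hy).1).continuousAt.continuousWithinAt)
      (fun y hy => by rw [interior_Icc] at hy ⊢; exact (hd y (hsubI y hy).1).hasDerivWithinAt)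
      (fun y hy => by
        rw [interior_Icc] at hy
        rw [← hm']
        exact h'_anti (left_mem_Icc.2 hmc.le) (Ioo_subset_Icc_self hy) hy.1)
  have hcI : c ∈ Icc a b := Ioo_subset_Icc_self (hsub (right_mem_Icc.2 hmc.le)).1
  exact (h_anti (left_mem_Icc.2 hmc.le) (right_mem_Icc.2 hmc.le) hmc).not_ge (hmin hcI)

section Comparison

variable {q U U' U'' G G' G'' : ℝ → ℝ}

theorem le_on_Icc_of_deriv2_comparison {a b : ℝ} (hU : ContinuousOn U (Icc a b))
    (hU' : ∀ x ∈ Ioo a b, HasDerivAt U (U' x) x)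
    (hU'' : ∀ x ∈ Ioo a b, HasDerivAt U' (U'' x) x) (hG : ContinuousOn G (Icc a b))
    (hG' : ∀ x ∈ Ioo a b, HasDerivAt G (G' x) x)
    (hG'' : ∀ x ∈ Ioo a b, HasDerivAt G' (G'' x) x) (hq : ∀ x ∈ Ioo a b, 0 < q x)
    (hsub : ∀ x ∈ Ioo a b, q x * U x ≤ U'' x) (hsuper : ∀ x ∈ Ioo a b, G'' x ≤ q x * G x)
    (ha : U a ≤ G a) (hb : U b ≤ G b) : ∀ x ∈ Icc a b, U x ≤ G x := by
  intro x hx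
  refine sub_nonneg.1 (nonneg_on_Icc_of_deriv2_neg (h := fun y => G y - U y) (hG.sub hU)
    (fun y hy => (hG' y hy).sub (hU' y hy)) (fun y hy => (hG'' y hy).sub (hU'' y hy))
    (fun y hy hneg => by
      nlinarith [hsub y hy, hsuper y hy, mul_neg_of_pos_of_neg (hq y hy) hneg])
    (sub_nonneg.2 ha) (sub_nonneg.2 hb) x hx)

theorem le_on_Ici_of_deriv2_comparison {a : ℝ} (hU : ContinuousOn U (Ici a))
    (hU' : ∀ x ∈ Ioi a, HasDerivAt U (U' x) x) (hU'' : ∀ x ∈ Ioi a, HasDerivAt U' (U'' x) x)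
    (hG : ContinuousOn G (Ici a)) (hG' : ∀ x ∈ Ioi a, HasDerivAt G (G' x) x)
    (hG'' : ∀ x ∈ Ioi a, HasDerivAt G' (G'' x) x) (hq : ∀ x ∈ Ioi a, 0 < q x)
    (hsub : ∀ x ∈ Ioi a, q x * U x ≤ U'' x) (hsuper : ∀ x ∈ Ioi a, G'' x ≤ q x * G x)
    (ha : U a ≤ G a) (hlim : ∀ ε > 0, ∀ᶠ x in atTop, U x < G x + ε) :
    ∀ x ∈ Ici a, U x ≤ G x := by
  intro x hx
  -- compare `U` with the supersolution `G + ε` on `[a, b]`, where `b ≥ x` has `U b < G b + ε`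
  refine le_of_forall_pos_le_add fun ε hε => ?_
  obtain ⟨b, hb, hxb⟩ := ((hlim ε hε).and (eventually_ge_atTop x)).exists
  have hIoo : Ioo a b ⊆ Ioi a := Ioo_subset_Ioi_self
  exact le_on_Icc_of_deriv2_comparison (G := fun y => G y + ε) (hU.mono Icc_subset_Ici_self)
    (fun y hy => hU' y (hIoo hy)) (fun y hy => hU'' y (hIoo hy))
    ((hG.mono Icc_subset_Ici_self).add continuousOn_const)
    (fun y hy => (hG' y (hIoo hy)).add_const ε) (fun y hy => hG'' y (hIoo hy))
    (fun y hy => hq y (hIoo hy)) (fun y hy => hsub y (hIoo hy))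
    (fun y hy => by nlinarith [hsuper y (hIoo hy), hq y (hIoo hy)]) (by linarith)
    (by linarith) x ⟨hx, hxb⟩

end Comparison

theorem hasDerivAt_gaussian (β k c x : ℝ) :
    HasDerivAt (fun y => c * Real.exp (-β * (y - k) ^ 2 / 2))
      (-β * (x - k) * (c * Real.exp (-β * (x - k) ^ 2 / 2))) x := by
  have h := ((((hasDerivAt_id' x).sub_const k).fun_pow 2).const_mul (-β)).div_const 2
  exact (h.exp.const_mul c).congr_deriv (by ring)

theorem hasDerivAt_deriv_gaussian (β k c x : ℝ) :
    HasDerivAt (fun y => -β * (y - k) * (c * Real.exp (-β * (y - k) ^ 2 / 2)))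
      ((β ^ 2 * (x - k) ^ 2 - β) * (c * Real.exp (-β * (x - k) ^ 2 / 2))) x := by
  have h := (((hasDerivAt_id' x).sub_const k).const_mul (-β)).fun_mul
    (hasDerivAt_gaussian β k c x)
  exact h.congr_deriv (by ring)

theorem MeasureTheory.IntegrableOn.frequently_abs_le {a ε : ℝ} {g : ℝ → ℝ}
    (hg : IntegrableOn g (Ioi a)) (hε : 0 < ε) : ∃ᶠ x in atTop, |g x| ≤ ε := by
  intro h
  obtain ⟨X, hX⟩ := eventually_atTop.1 h
  have hlarge : Ioi (max a X) ⊆ {x | ε < ‖g x‖} := fun x hx =>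
    not_le.1 (hX x (le_of_max_le_right hx.le))
  have hinf : volume.restrict (Ioi a) (Ioi (max a X)) = ⊤ := by
    rw [Measure.restrict_apply measurableSet_Ioi, Ioi_inter_Ioi, max_comm, Real.volume_Ioi]
  exact (hg.norm.measure_gt_lt_top hε).ne (eq_top_mono (measure_mono hlarge) hinf)

section HalfLine

variable {a : ℝ} {u v w : ℝ → ℝ}

theorem integrableOn_Ioi_mul_of_sq (hu : ContinuousOn u (Ici a)) (hv : ContinuousOn v (Ici a))
    (hu2 : IntegrableOn (fun x => u x ^ 2) (Ioi a))
    (hv2 : IntegrableOn (fun x => v x ^ 2) (Ioi a)) :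
    IntegrableOn (fun x => u x * v x) (Ioi a) :=
  have memLp_two {f : ℝ → ℝ} (hf : ContinuousOn f (Ici a))
      (hf2 : IntegrableOn (fun x => f x ^ 2) (Ioi a) volume) :
      MemLp f 2 (volume.restrict (Ioi a)) :=
    (memLp_two_iff_integrable_sq
      ((hf.mono Ioi_subset_Ici_self).aestronglyMeasurable measurableSet_Ioi)).2 hf2
  (memLp_two hu hu2).integrable_mul (memLp_two hv hv2)

theorem tendsto_atTop_zero_of_integrableOn_sq (hu' : ∀ x ∈ Ioi a, HasDerivAt u (v x) x)
    (hu2 : IntegrableOn (fun x => u x ^ 2) (Ioi a))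
    (huv : IntegrableOn (fun x => u x * v x) (Ioi a)) : Tendsto u atTop (𝓝 0) := by
  have hsq : Tendsto (fun x => u x ^ 2) atTop (𝓝 0) :=
    tendsto_zero_of_hasDerivAt_of_integrableOn_Ioi
      (fun x hx => ((hu' x hx).pow 2).congr_deriv (by ring)) (huv.const_mul 2) hu2
  have habs : Tendsto (fun x => |u x|) atTop (𝓝 0) := by
    simpa only [Real.sqrt_sq_eq_abs, Real.sqrt_zero] using hsq.sqrt
  exact (tendsto_zero_iff_abs_tendsto_zero u).2 habs

theorem sq_eq_intervalIntegral_two_mul (hu : ContinuousOn u (Ici a))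
    (hv : ContinuousOn v (Ici a)) (hu' : ∀ x ∈ Ioi a, HasDerivAt u (v x) x) (hua : u a = 0)
    {x : ℝ} (hx : a ≤ x) :
    u x ^ 2 = ∫ y in a..x, 2 * (u y * v y) := by
  have hIcc : Icc a x ⊆ Ici a := Icc_subset_Ici_self
  rw [intervalIntegral.integral_eq_sub_of_hasDeriv_right_of_le (f := fun y => u y ^ 2)
    (f' := fun y => 2 * (u y * v y)) hx ((hu.mono hIcc).pow 2)
    (fun y hy => (((hu' y hy.1).pow 2).congr_deriv (by ring)).hasDerivWithinAt)
    ((continuousOn_const.mul ((hu.mul hv).mono hIcc)).intervalIntegrable_of_Icc hx), hua]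
  ring

theorem sq_le_integral_sq_add_integral_sq (hu : ContinuousOn u (Ici a))
    (hv : ContinuousOn v (Ici a)) (hu' : ∀ x ∈ Ioi a, HasDerivAt u (v x) x) (hua : u a = 0)
    (hu2 : IntegrableOn (fun x => u x ^ 2) (Ioi a))
    (hv2 : IntegrableOn (fun x => v x ^ 2) (Ioi a)) {x : ℝ} (hx : a ≤ x) :
    u x ^ 2 ≤ (∫ y in Ioi a, u y ^ 2) + ∫ y in Ioi a, v y ^ 2 := by
  have hIcc : Icc a x ⊆ Ici a := Icc_subset_Ici_self
  rw [sq_eq_intervalIntegral_two_mul hu hv hu' hua hx, ← integral_add hu2 hv2]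
  calc ∫ y in a..x, 2 * (u y * v y)
      ≤ ∫ y in a..x, (u y ^ 2 + v y ^ 2) :=
        intervalIntegral.integral_mono_on hx
          ((continuousOn_const.mul ((hu.mul hv).mono hIcc)).intervalIntegrable_of_Icc hx)
          ((((hu.pow 2).add (hv.pow 2)).mono hIcc).intervalIntegrable_of_Icc hx)
          fun y _ => by linarith [two_mul_le_add_sq (u y) (v y)]
    _ = ∫ y in Ioc a x, (u y ^ 2 + v y ^ 2) := intervalIntegral.integral_of_le hx
    _ ≤ ∫ y in Ioi a, (u y ^ 2 + v y ^ 2) :=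
        setIntegral_mono_set (hu2.add hv2) (ae_of_all _ fun y => by positivity)
          Ioc_subset_Ioi_self.eventuallyLE

theorem integral_sq_deriv_le (hu : ContinuousOn u (Ici a)) (hv : ContinuousOn v (Ici a))
    (hw : ContinuousOn w (Ici a)) (hu' : ∀ x ∈ Ioi a, HasDerivAt u (v x) x)
    (hv' : ∀ x ∈ Ioi a, HasDerivAt v (w x) x) (hua : u a = 0)
    (hu2 : IntegrableOn (fun x => u x ^ 2) (Ioi a))
    (hv2 : IntegrableOn (fun x => v x ^ 2) (Ioi a)) {lam : ℝ} (hlam : 0 ≤ lam)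
    (hw_ge : ∀ x ∈ Ici a, -lam * u x ^ 2 ≤ u x * w x) :
    ∫ x in Ioi a, v x ^ 2 ≤ lam * ∫ x in Ioi a, u x ^ 2 := by
  have huv := integrableOn_Ioi_mul_of_sq hu hv hu2 hv2
  have htrunc : ∀ R, a ≤ R →
      ∫ x in a..R, v x ^ 2 ≤ u R * v R + lam * ∫ x in Ioi a, u x ^ 2 := by
    intro R hR
    have hIcc : Icc a R ⊆ Ici a := Icc_subset_Ici_self
    have hint : ∀ {f : ℝ → ℝ}, ContinuousOn f (Ici a) → IntervalIntegrable f volume a R :=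
      fun hf => (hf.mono hIcc).intervalIntegrable_of_Icc hR
    have hparts : (∫ x in a..R, v x ^ 2) + ∫ x in a..R, u x * w x = u R * v R := by
      rw [← intervalIntegral.integral_add (hint (f := fun x => v x ^ 2) (hv.pow 2))
          (hint (f := fun x => u x * w x) (hu.mul hw)),
        intervalIntegral.integral_eq_sub_of_hasDeriv_right_of_le (f := fun x => u x * v x)
          (f' := fun x => v x ^ 2 + u x * w x) hR
          ((hu.mul hv).mono hIcc)
          (fun x hx => (((hu' x hx.1).mul (hv' x hx.1)).congr_deriv (by ring)).hasDerivWithinAt)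
          (hint (f := fun x => v x ^ 2 + u x * w x) ((hv.pow 2).add (hu.mul hw))), hua, zero_mul,
          sub_zero]
    have hpot : -lam * ∫ x in a..R, u x ^ 2 ≤ ∫ x in a..R, u x * w x := by
      rw [← intervalIntegral.integral_const_mul]
      exact intervalIntegral.integral_mono_on hR (hint (continuousOn_const.mul (hu.pow 2)))
        (hint (hu.mul hw)) fun x hx => hw_ge x hx.1
    have hmass : ∫ x in a..R, u x ^ 2 ≤ ∫ x in Ioi a, u x ^ 2 := by
      rw [intervalIntegral.integral_of_le hR]
      exact setIntegral_mono_set hu2 (ae_of_all _ fun x => sq_nonneg (u x))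
        Ioc_subset_Ioi_self.eventuallyLE
    linarith [mul_le_mul_of_nonneg_left hmass hlam]
  -- the boundary term `u R * v R` is small for arbitrarily large `R`, as `u * v` is integrable
  refine le_of_forall_pos_le_add fun ε hε =>
    le_of_tendsto_of_frequently (intervalIntegral_tendsto_integral_Ioi a hv2 tendsto_id) ?_
  refine ((huv.frequently_abs_le hε).and_eventually (eventually_ge_atTop a)).mono ?_
  rintro R ⟨hsmall, hR⟩
  exact (htrunc R hR).trans (by linarith [(abs_le.1 hsmall).2])

end HalfLine

theorem le_gaussian_of_deriv2_eq {β k lam s B : ℝ} {U U' U'' : ℝ → ℝ} (hβ : β ∈ Icc 0 1)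
    (hk : 0 ≤ k) (hs : 0 ≤ s) (hlam : lam ≤ (1 - β ^ 2) * s) (hU : ContinuousOn U (Ici 0))
    (hU' : ∀ x ∈ Ioi 0, HasDerivAt U (U' x) x) (hU'' : ∀ x ∈ Ioi 0, HasDerivAt U' (U'' x) x)
    (heq : ∀ x ∈ Ioi 0, U'' x = ((x - k) ^ 2 - lam) * U x) (hU0 : U 0 = 0)
    (hB : ∀ x ∈ Ici 0, U x ≤ B) (hlim : Tendsto U atTop (𝓝 0)) :
    ∀ x ∈ Ici 0, U x ≤ B * Real.exp (β * s / 2) * Real.exp (-β * (x - k) ^ 2 / 2) := by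
  obtain ⟨hβ0, hβ1⟩ := hβ
  set c := B * Real.exp (β * s / 2)
  set G : ℝ → ℝ := fun x => c * Real.exp (-β * (x - k) ^ 2 / 2)
  set r := Real.sqrt s
  have hr : r ^ 2 = s := Real.sq_sqrt hs
  have hr0 : 0 ≤ r := Real.sqrt_nonneg s
  have hB0 : 0 ≤ B := hU0 ▸ hB 0 self_mem_Ici
  have hG0 : ∀ x, 0 ≤ G x := fun x => by positivity
  have hG_inner : ∀ x, (x - k) ^ 2 ≤ s → B ≤ G x := fun x hx => by
    calc B ≤ B * Real.exp (β * s / 2 + -β * (x - k) ^ 2 / 2) :=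
          le_mul_of_one_le_right hB0 (Real.one_le_exp (by nlinarith))
      _ = G x := by rw [Real.exp_add, ← mul_assoc]
  have hG_outer : ∀ x, s < (x - k) ^ 2 → 0 < (x - k) ^ 2 - lam ∧
      (β ^ 2 * (x - k) ^ 2 - β) * G x ≤ ((x - k) ^ 2 - lam) * G x := fun x hx =>
    have hgap : lam ≤ (1 - β ^ 2) * (x - k) ^ 2 :=
      hlam.trans (mul_le_mul_of_nonneg_left hx.le (by nlinarith))
    ⟨by nlinarith, mul_le_mul_of_nonneg_right (by nlinarith) (hG0 x)⟩
  have hGc : ContinuousOn G (Ici 0) := by fun_prop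
  intro x hx
  rcases le_or_gt ((x - k) ^ 2) s with hinner | houter
  · exact (hB x hx).trans (hG_inner x hinner)
  rcases le_total x k with hxk | hkx
  · have hxr : x ≤ k - r := by nlinarith
    have hsub : Icc 0 (k - r) ⊆ Ici 0 := Icc_subset_Ici_self
    have hreg : ∀ y ∈ Ioo 0 (k - r), s < (y - k) ^ 2 := fun y hy => by nlinarith [hy.2]
    exact le_on_Icc_of_deriv2_comparison (hU.mono hsub) (fun y hy => hU' y hy.1)
      (fun y hy => hU'' y hy.1) (hGc.mono hsub) (fun y _ => hasDerivAt_gaussian β k c y)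
      (fun y _ => hasDerivAt_deriv_gaussian β k c y) (fun y hy => (hG_outer y (hreg y hy)).1)
      (fun y hy => (heq y hy.1).ge) (fun y hy => (hG_outer y (hreg y hy)).2)
      (by rw [hU0]; exact hG0 0) ((hB _ (hx.trans hxr)).trans (hG_inner _ (by nlinarith)))
      x ⟨hx, hxr⟩
  · have hxr : k + r ≤ x := by nlinarith
    have hsub : Ici (k + r) ⊆ Ici 0 := Ici_subset_Ici.2 (by positivity)
    have hsub' : Ioi (k + r) ⊆ Ioi 0 := Ioi_subset_Ioi (by positivity)
    have hreg : ∀ y ∈ Ioi (k + r), s < (y - k) ^ 2 := fun y hy => by nlinarith [mem_Ioi.1 hy]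
    refine le_on_Ici_of_deriv2_comparison (hU.mono hsub) (fun y hy => hU' y (hsub' hy))
      (fun y hy => hU'' y (hsub' hy)) (hGc.mono hsub) (fun y _ => hasDerivAt_gaussian β k c y)
      (fun y _ => hasDerivAt_deriv_gaussian β k c y) (fun y hy => (hG_outer y (hreg y hy)).1)
      (fun y hy => (heq y (hsub' hy)).ge) (fun y hy => (hG_outer y (hreg y hy)).2)
      ((hB _ (hsub self_mem_Ici)).trans (hG_inner _ (by nlinarith)))
      (fun ε hε => (hlim.eventually (gt_mem_nhds hε)).mono fun y hy => by linarith [hG0 y])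
      x hxr

/-- uniform Agmon estimate: for β ∈ (0,1) and Λ > 0 there is C = C(β,Λ) such
that every normalized Dirichlet eigenfunction of `-d²/dx² + (x-k)²` on (0,∞) with k ≥ 0 and
eigenvalue λ ∈ (0,Λ] satisfies `|u(x)| ≤ C e^{-β(x-k)²/2}` for all x ≥ 0. -/
theorem uniform_agmon_estimate (β Λ : ℝ) (hβ : β ∈ Set.Ioo (0:ℝ) 1) (hΛ : 0 < Λ) :
    ∃ C > 0, ∀ k ≥ (0:ℝ), ∀ lam ∈ Set.Ioc (0:ℝ) Λ, ∀ u v w : ℝ → ℝ,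
      (∀ x ∈ Set.Ici (0:ℝ), HasDerivWithinAt u (v x) (Set.Ici 0) x) →
      (∀ x ∈ Set.Ici (0:ℝ), HasDerivWithinAt v (w x) (Set.Ici 0) x) →
      ContinuousOn w (Set.Ici 0) →
      u 0 = 0 →
      (∀ x ≥ (0:ℝ), -w x + (x - k) ^ 2 * u x = lam * u x) →
      MeasureTheory.IntegrableOn (fun x => (u x) ^ 2) (Set.Ioi 0) →
      MeasureTheory.IntegrableOn (fun x => (v x) ^ 2) (Set.Ioi 0) →
      (∫ x in Set.Ioi (0:ℝ), (u x) ^ 2) = 1 →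
      ∀ x ≥ (0:ℝ), |u x| ≤ C * Real.exp (-β * (x - k) ^ 2 / 2) := by
  have hβ2 : 0 < 1 - β ^ 2 := by nlinarith [hβ.1, hβ.2]
  set s := Λ / (1 - β ^ 2)
  refine ⟨Real.sqrt (1 + Λ) * Real.exp (β * s / 2), by positivity, ?_⟩
  intro k hk lam hlam u v w hu hv hw hu0 heq hu2 hv2 hnorm
  have hcu : ContinuousOn u (Ici 0) := fun x hx => (hu x hx).continuousWithinAt
  have hcv : ContinuousOn v (Ici 0) := fun x hx => (hv x hx).continuousWithinAt
  have hu' : ∀ x ∈ Ioi 0, HasDerivAt u (v x) x := fun x hx =>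
    (hu x (Ioi_subset_Ici_self hx)).hasDerivAt (Ici_mem_nhds hx)
  have hv' : ∀ x ∈ Ioi 0, HasDerivAt v (w x) x := fun x hx =>
    (hv x (Ioi_subset_Ici_self hx)).hasDerivAt (Ici_mem_nhds hx)
  have hw_eq : ∀ x ∈ Ici 0, w x = ((x - k) ^ 2 - lam) * u x := fun x hx => by
    linarith [heq x hx]
  have henergy : ∫ x in Ioi 0, v x ^ 2 ≤ lam := by
    simpa only [hnorm, mul_one] using integral_sq_deriv_le hcu hcv hw hu' hv' hu0 hu2 hv2
      hlam.1.le fun x hx => by rw [hw_eq x hx]; nlinarith [sq_nonneg ((x - k) * u x)]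
  have hsup : ∀ x ∈ Ici 0, |u x| ≤ Real.sqrt (1 + Λ) := fun x hx => Real.abs_le_sqrt <| by
    linarith [sq_le_integral_sq_add_integral_sq hcu hcv hu' hu0 hu2 hv2 hx, hlam.2]
  have hlim : Tendsto u atTop (𝓝 0) :=
    tendsto_atTop_zero_of_integrableOn_sq hu' hu2 (integrableOn_Ioi_mul_of_sq hcu hcv hu2 hv2)
  have hlam_s : lam ≤ (1 - β ^ 2) * s := by rw [mul_div_cancel₀ _ hβ2.ne']; exact hlam.2
  intro x hx
  have hupper := le_gaussian_of_deriv2_eq (Ioo_subset_Icc_self hβ) hk (by positivity) hlam_s hcu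
    hu' hv' (fun y hy => hw_eq y (Ioi_subset_Ici_self hy)) hu0
    (fun y hy => (abs_le.1 (hsup y hy)).2) hlim x hx
  have hlower := le_gaussian_of_deriv2_eq (U := fun y => -u y) (Ioo_subset_Icc_self hβ) hk
    (by positivity) hlam_s hcu.neg (fun y hy => (hu' y hy).neg) (fun y hy => (hv' y hy).neg)
    (fun y hy => by rw [hw_eq y (Ioi_subset_Ici_self hy)]; ring) (by simp [hu0])
    (fun y hy => neg_le.1 (abs_le.1 (hsup y hy)).1) (by simpa using hlim.neg) x hx
  exact abs_le.2 ⟨by linarith, hupper⟩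
end
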